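/- arXiv:2509.02519 — 2 statements merged into one kernel-verified Lean document; each statement's English description precedes it below -/
import Mathlib

section
/- Let ℰ = (V, A, k) be an election instance in the voter interval (VI) domain with k even, and let S be any one of the score functions AV, CC, or Pairs. Then there exists a feasible committee W (|W| = k) such that Cons(W) ≥ (1/4) · max{Cons(W') : |W'| = k} and S(W) ≥ (1/2) · max{S(W') : |W'| = k}. -/
noncomputable section

/-- The approval (AV) score of a committee `W`. -/
def avScore {V C : Type*} [Fintype V] [DecidableEq C]
    (A : V → Finset C) (W : Finset C) : ℕ :=
  ∑ v, (A v ∩ W).card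

/-- The Chamberlin–Courant (CC) score of a committee `W`. -/
def ccScore {V C : Type*} [Fintype V] [DecidableEq C]
    (A : V → Finset C) (W : Finset C) : ℕ :=
  (Finset.univ.filter fun v : V => (A v ∩ W).Nonempty).card

/-- The `Pairs` score of a committee `W`: the number of unordered pairs of distinct
voters that jointly approve some member of `W`. -/
def pairsScore {V C : Type*} [DecidableEq C] (A : V → Finset C) (W : Finset C) : ℕ :=
  Set.ncard {p : Sym2 V | ¬ p.IsDiag ∧ ∃ u v : V, p = s(u, v) ∧ (A u ∩ A v ∩ W).Nonempty}

/-- Voters `u` and `v` are connected by the committee `W`. -/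
def ConnectedBy {V C : Type*} [DecidableEq C]
    (A : V → Finset C) (W : Finset C) (u v : V) : Prop :=
  Relation.ReflTransGen (fun a b => (A a ∩ A b ∩ W).Nonempty) u v

/-- The `Cons` score of a committee `W`: the number of unordered pairs of distinct
voters connected by `W`. -/
def consScore {V C : Type*} [DecidableEq C] (A : V → Finset C) (W : Finset C) : ℕ :=
  Set.ncard {p : Sym2 V | ¬ p.IsDiag ∧ ∃ u v : V, p = s(u, v) ∧ ConnectedBy A W u v}

/-- The maximum value of a committee score over all committees of size `k`. -/
def maxScore {C : Type*} [Fintype C] [DecidableEq C] (f : Finset C → ℕ) (k : ℕ) : ℕ :=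
  ((Finset.univ : Finset C).powersetCard k).sup f

/-- The election belongs to the voter interval (VI) domain: there is an ordering of the
voters such that every candidate's set of supporters is an interval of this ordering. -/
def IsVI {V C : Type*} [Fintype V] [DecidableEq V] [DecidableEq C]
    (A : V → Finset C) : Prop :=
  ∃ τ : Fin (Fintype.card V) ≃ V, ∀ c : C, ∃ i j : Fin (Fintype.card V),
    (Finset.univ.filter fun v => c ∈ A v) = (Finset.Icc i j).image τ

/-! ### Auxiliary development -/

open Finset

namespace VIAux

variable {V C : Type*}

/-- Monotonicity of connectivity in the committee. -/
lemma connectedBy_mono [DecidableEq C] {A : V → Finset C} {W₁ W₂ : Finset C}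
    (h : W₁ ⊆ W₂) {u v : V} (hc : ConnectedBy A W₁ u v) : ConnectedBy A W₂ u v := by
  induction hc with
  | refl => exact Relation.ReflTransGen.refl
  | tail _ hstep ih =>
      refine ih.tail ?_
      obtain ⟨c, hc'⟩ := hstep
      simp only [Finset.mem_inter] at hc'
      exact ⟨c, by simp only [Finset.mem_inter]; exact ⟨hc'.1, h hc'.2⟩⟩

lemma consScore_mono [DecidableEq C] (A : V → Finset C) {W₁ W₂ : Finset C} [Finite V]
    (h : W₁ ⊆ W₂) : consScore A W₁ ≤ consScore A W₂ := by
  unfold consScore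
  refine Set.ncard_le_ncard ?_ (Set.toFinite _)
  rintro p ⟨hd, u, v, rfl, hc⟩
  exact ⟨hd, u, v, rfl, connectedBy_mono h hc⟩

lemma pairsScore_mono [DecidableEq C] (A : V → Finset C) {W₁ W₂ : Finset C} [Finite V]
    (h : W₁ ⊆ W₂) : pairsScore A W₁ ≤ pairsScore A W₂ := by
  unfold pairsScore
  refine Set.ncard_le_ncard ?_ (Set.toFinite _)
  rintro p ⟨hd, u, v, rfl, c, hc⟩
  simp only [Finset.mem_inter] at hc
  exact ⟨hd, u, v, rfl, c, by simp only [Finset.mem_inter]; exact ⟨hc.1, h hc.2⟩⟩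

lemma avScore_mono [Fintype V] [DecidableEq C] (A : V → Finset C) {W₁ W₂ : Finset C}
    (h : W₁ ⊆ W₂) : avScore A W₁ ≤ avScore A W₂ := by
  unfold avScore
  exact Finset.sum_le_sum fun v _ => Finset.card_le_card (by gcongr)

lemma ccScore_mono [Fintype V] [DecidableEq C] (A : V → Finset C) {W₁ W₂ : Finset C}
    (h : W₁ ⊆ W₂) : ccScore A W₁ ≤ ccScore A W₂ := by
  unfold ccScore
  refine Finset.card_le_card (Finset.monotone_filter_right _ ?_)
  intro v _ hv
  exact hv.mono (by gcongr)

lemma avScore_union_le [Fintype V] [DecidableEq C] (A : V → Finset C) (W₁ W₂ : Finset C) :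
    avScore A (W₁ ∪ W₂) ≤ avScore A W₁ + avScore A W₂ := by
  unfold avScore
  rw [← Finset.sum_add_distrib]
  refine Finset.sum_le_sum fun v _ => ?_
  rw [Finset.inter_union_distrib_left]
  exact Finset.card_union_le _ _

lemma ccScore_union_le [Fintype V] [DecidableEq V] [DecidableEq C] (A : V → Finset C) (W₁ W₂ : Finset C) :
    ccScore A (W₁ ∪ W₂) ≤ ccScore A W₁ + ccScore A W₂ := by
  unfold ccScore
  refine le_trans (Finset.card_le_card ?_) (Finset.card_union_le _ _)
  intro v hv
  simp only [Finset.mem_filter, Finset.mem_union] at hv ⊢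
  obtain ⟨hv1, c, hc⟩ := hv
  simp only [Finset.mem_inter, Finset.mem_union] at hc
  rcases hc.2 with h | h
  · exact Or.inl ⟨hv1, c, Finset.mem_inter.2 ⟨hc.1, h⟩⟩
  · exact Or.inr ⟨hv1, c, Finset.mem_inter.2 ⟨hc.1, h⟩⟩

lemma pairsScore_union_le [DecidableEq C] [Finite V] (A : V → Finset C) (W₁ W₂ : Finset C) :
    pairsScore A (W₁ ∪ W₂) ≤ pairsScore A W₁ + pairsScore A W₂ := by
  unfold pairsScore
  refine le_trans (Set.ncard_le_ncard ?_ (Set.toFinite _)) (Set.ncard_union_le _ _)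
  rintro p ⟨hd, u, v, rfl, c, hc⟩
  simp only [Finset.mem_inter, Finset.mem_union] at hc
  rcases hc.2 with h | h
  · exact Or.inl ⟨hd, u, v, rfl, c, by simp only [Finset.mem_inter]; exact ⟨hc.1, h⟩⟩
  · exact Or.inr ⟨hd, u, v, rfl, c, by simp only [Finset.mem_inter]; exact ⟨hc.1, h⟩⟩

lemma le_maxScore {C : Type*} [Fintype C] [DecidableEq C] (f : Finset C → ℕ) {k : ℕ}
    {W : Finset C} (h : W.card = k) : f W ≤ maxScore f k :=
  Finset.le_sup (by rw [Finset.mem_powersetCard]; exact ⟨Finset.subset_univ _, h⟩)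

lemma maxScore_exists {C : Type*} [Fintype C] [DecidableEq C] (f : Finset C → ℕ) {k : ℕ}
    (hk : k ≤ Fintype.card C) : ∃ W : Finset C, W.card = k ∧ maxScore f k = f W := by
  obtain ⟨t, -, ht⟩ := Finset.exists_subset_card_eq (show k ≤ (Finset.univ : Finset C).card by
    simpa using hk)
  have hne : ((Finset.univ : Finset C).powersetCard k).Nonempty :=
    ⟨t, by rw [Finset.mem_powersetCard]; exact ⟨Finset.subset_univ _, ht⟩⟩
  obtain ⟨W, hW, hW2⟩ := Finset.exists_mem_eq_sup _ hne f
  rw [Finset.mem_powersetCard] at hW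
  exact ⟨W, hW.2, hW2⟩

/-- Combining the `Cons` half-committee with a half of the `f`-optimal committee. -/
lemma combine {V C : Type*} [Fintype V] [Fintype C] [DecidableEq C]
    (A : V → Finset C) (k : ℕ) (hkm : k ≤ Fintype.card C) (hkeven : Even k)
    (hmain : ∃ H : Finset C, 2 * H.card ≤ k ∧ maxScore (consScore A) k ≤ 4 * consScore A H)
    (f : Finset C → ℕ)
    (hmono : ∀ W₁ W₂ : Finset C, W₁ ⊆ W₂ → f W₁ ≤ f W₂)
    (hsub : ∀ W₁ W₂ : Finset C, f (W₁ ∪ W₂) ≤ f W₁ + f W₂) :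
    ∃ W : Finset C, W.card = k ∧
      (1 / 4 : ℝ) * (maxScore (consScore A) k : ℝ) ≤ (consScore A W : ℝ) ∧
      (1 / 2 : ℝ) * (maxScore f k : ℝ) ≤ (f W : ℝ) := by
  classical
  obtain ⟨d, hd⟩ := hkeven
  obtain ⟨Hc, hc1, hc2⟩ := hmain
  obtain ⟨Ws, hWscard, hWs⟩ := maxScore_exists f hkm
  obtain ⟨H1, hH1sub, hH1card⟩ := Finset.exists_subset_card_eq
    (show d ≤ Ws.card by omega)
  set H2 : Finset C := Ws \ H1 with hH2
  have hH2card : H2.card = d := by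
    rw [hH2, Finset.card_sdiff_of_subset hH1sub, hH1card, hWscard]; omega
  have hunion : H1 ∪ H2 = Ws := Finset.union_sdiff_of_subset hH1sub
  have hsplit : f Ws ≤ f H1 + f H2 := by rw [← hunion]; exact hsub _ _
  set Hs : Finset C := if f H1 ≤ f H2 then H2 else H1 with hHs
  have hHscard : Hs.card = d := by rw [hHs]; split <;> assumption
  have hHsval : f Ws ≤ 2 * f Hs := by
    rw [hHs]; split <;> omega
  set U : Finset C := Hc ∪ Hs with hU
  have hUcard : U.card ≤ k := by
    refine le_trans (Finset.card_union_le _ _) ?_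
    omega
  obtain ⟨Wf, hUWf, -, hWfcard⟩ :=
    Finset.exists_subsuperset_card_eq (Finset.subset_univ U) hUcard (by simpa using hkm)
  refine ⟨Wf, hWfcard, ?_, ?_⟩
  · have h1 : consScore A Hc ≤ consScore A Wf :=
      consScore_mono A (le_trans (Finset.subset_union_left) hUWf)
    have : (maxScore (consScore A) k : ℝ) ≤ 4 * (consScore A Wf : ℝ) := by
      have : maxScore (consScore A) k ≤ 4 * consScore A Wf := by omega
      exact_mod_cast this
    linarith
  · have h1 : f Hs ≤ f Wf := hmono _ _ (le_trans (Finset.subset_union_right) hUWf)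
    have h2 : maxScore f k ≤ 2 * f Wf := by omega
    have : (maxScore f k : ℝ) ≤ 2 * (f Wf : ℝ) := by exact_mod_cast h2
    linarith


variable {V C : Type*}

section Core

variable [Fintype V] [LinearOrder V] [DecidableEq C]

/-- The supporters of a candidate. -/
def supp (A : V → Finset C) (c : C) : Finset V :=
  Finset.univ.filter (fun v => c ∈ A v)

lemma mem_supp {A : V → Finset C} {c : C} {v : V} : v ∈ supp A c ↔ c ∈ A v := by
  simp [supp]

/-- The voter-interval property with respect to the linear order. -/
def IntervalProp (A : V → Finset C) : Prop :=
  ∀ (c : C) (u w v : V), u ≤ w → w ≤ v → c ∈ A u → c ∈ A v → c ∈ A w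

variable {A : V → Finset C} {W : Finset C}

lemma conn_symm {u v : V} (h : ConnectedBy A W u v) : ConnectedBy A W v u := by
  refine @Std.Symm.symm _ _ (@Relation.ReflTransGen.stdSymm _ _ ⟨?_⟩) _ _ h
  intro a b ⟨c, hc⟩
  simp only [Finset.mem_inter] at hc
  exact ⟨c, by simp only [Finset.mem_inter]; exact ⟨⟨hc.1.2, hc.1.1⟩, hc.2⟩⟩

lemma conn_single {u v : V} {c : C} (hc : c ∈ W) (hu : c ∈ A u) (hv : c ∈ A v) :
    ConnectedBy A W u v :=
  Relation.ReflTransGen.single ⟨c, by simp only [Finset.mem_inter]; exact ⟨⟨hu, hv⟩, hc⟩⟩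

lemma covered_src {u v : V} (h : ConnectedBy A W u v) (hne : u ≠ v) :
    (A u ∩ W).Nonempty := by
  rcases h.cases_head with h' | ⟨x, ⟨c, hc⟩, -⟩
  · exact absurd h' hne
  · simp only [Finset.mem_inter] at hc
    exact ⟨c, Finset.mem_inter.2 ⟨hc.1.1, hc.2⟩⟩

lemma covered_tgt {u v : V} (h : ConnectedBy A W u v) (hne : u ≠ v) :
    (A v ∩ W).Nonempty :=
  covered_src (conn_symm h) (Ne.symm hne)

lemma conn_between (hA : IntervalProp A) {u v w : V} (h : ConnectedBy A W u v)
    (h1 : u ≤ w) (h2 : w ≤ v) : ConnectedBy A W u w := by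
  refine Relation.ReflTransGen.head_induction_on
    (motive := fun a _ => a ≤ w → ConnectedBy A W a w) h ?_ ?_ h1
  · intro hvw
    have : w = v := le_antisymm h2 hvw
    subst this; exact Relation.ReflTransGen.refl
  · intro a x hax hxv IH haw
    rcases le_total w x with hwx | hxw
    · obtain ⟨c, hc⟩ := hax
      simp only [Finset.mem_inter] at hc
      exact conn_single hc.2 hc.1.1 (hA c a w x haw hwx hc.1.1 hc.1.2)
    · exact (IH hxw).head hax

/-- The crossing lemma: if two consecutive covered voters of a component are
adjacent (no component member strictly between them), some committee member's
support contains both. -/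
lemma crossing (hA : IntervalProp A) {K : Finset V}
    (hKclosed : ∀ u v, u ∈ K → ConnectedBy A W u v → v ∈ K)
    {ρ ρ'' : V} (hρK : ρ ∈ K) (h1 : ρ < ρ'')
    (hnb : ∀ w ∈ K, ρ < w → ρ'' ≤ w)
    (hconn : ConnectedBy A W ρ ρ'') : ∃ c ∈ W, c ∈ A ρ ∧ c ∈ A ρ'' := by
  refine Relation.ReflTransGen.head_induction_on
    (motive := fun a _ => a ∈ K → a ≤ ρ → ∃ c ∈ W, c ∈ A ρ ∧ c ∈ A ρ'') hconn ?_ ?_ hρK le_rfl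
  · intro hK hle
    exact absurd (lt_of_lt_of_le h1 hle) (lt_irrefl ρ)
  · intro a x hax hxv IH haK hale
    obtain ⟨c, hc⟩ := hax
    simp only [Finset.mem_inter] at hc
    have hxK : x ∈ K := hKclosed a x haK (conn_single hc.2 hc.1.1 hc.1.2)
    rcases le_or_gt x ρ with hxρ | hρx
    · exact IH hxK hxρ
    · have hx'' : ρ'' ≤ x := hnb x hxK hρx
      exact ⟨c, hc.2, hA c a ρ x hale (le_of_lt hρx) hc.1.1 hc.1.2,
        hA c a ρ'' x (le_trans hale (le_of_lt h1)) hx'' hc.1.1 hc.1.2⟩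

/-- The component of a voter. -/
def compOf (A : V → Finset C) (W : Finset C) (u : V) : Finset V :=
  @Finset.filter _ (fun v => ConnectedBy A W u v) (Classical.decPred _) Finset.univ

lemma mem_compOf {A : V → Finset C} {W : Finset C} {u v : V} :
    v ∈ compOf A W u ↔ ConnectedBy A W u v := by
  simp [compOf, Finset.mem_filter]

lemma self_mem_compOf {A : V → Finset C} {W : Finset C} {u : V} : u ∈ compOf A W u :=
  mem_compOf.2 Relation.ReflTransGen.refl

lemma compOf_eq_of_conn {A : V → Finset C} {W : Finset C} {u v : V}
    (h : ConnectedBy A W u v) : compOf A W u = compOf A W v := by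
  ext w
  simp only [mem_compOf]
  exact ⟨fun h' => (conn_symm h).trans h', fun h' => h.trans h'⟩

end Core

section GoodChain

variable [Fintype V] [LinearOrder V] [DecidableEq C]

/-- A greedy chain of candidates connecting `ρ` to `b` inside the component `K`. -/
inductive Good (A : V → Finset C) (W : Finset C) (K : Finset V) (b : V) : V → List C → Prop
  | last : ∀ (ρ : V) (c : C), c ∈ W → supp A c ⊆ K → ρ ∈ supp A c → b ∈ supp A c →
      Good A W K b ρ [c]
  | cons : ∀ (ρ ρ' : V) (c : C) (ℓ : List C), c ∈ W → supp A c ⊆ K → ρ ∈ supp A c →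
      ρ' ∈ supp A c → (∀ w ∈ supp A c, w ≤ ρ') → ρ < ρ' → ρ' < b →
      Good A W K b ρ' ℓ → Good A W K b ρ (c :: ℓ)

variable {A : V → Finset C} {W : Finset C} {K : Finset V} {b : V}

lemma good_mem {ρ : V} {ℓ : List C} (h : Good A W K b ρ ℓ) :
    ∀ c ∈ ℓ, c ∈ W ∧ supp A c ⊆ K ∧ (supp A c).Nonempty := by
  induction h with
  | last ρ c hc hsub hρ hb =>
      intro d hd
      simp only [List.mem_singleton] at hd
      subst hd; exact ⟨hc, hsub, ⟨ρ, hρ⟩⟩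
  | cons ρ ρ' c ℓ hc hsub hρ hρ' hmax h1 h2 tail ih =>
      intro d hd
      rcases List.mem_cons.1 hd with rfl | hd
      · exact ⟨hc, hsub, ⟨ρ, hρ⟩⟩
      · exact ih d hd

variable [LocallyFiniteOrder V]

/-- Gluing connectivity across a shared candidate. -/
lemma conn_glue (hA : IntervalProp A) {F : Finset C} {c : C} (hcF : c ∈ F)
    {ρ ρ' τ : V} (hρ : c ∈ A ρ) (hρ' : c ∈ A ρ') (h1 : ρ ≤ ρ') (h2 : ρ' ≤ τ)
    (hIH : ∀ u v, u ∈ Finset.Icc ρ' τ → v ∈ Finset.Icc ρ' τ → ConnectedBy A F u v) :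
    ∀ u v, u ∈ Finset.Icc ρ τ → v ∈ Finset.Icc ρ τ → ConnectedBy A F u v := by
  have haux : ∀ u, u ∈ Finset.Icc ρ τ → ConnectedBy A F ρ' u := by
    intro u hu
    rw [Finset.mem_Icc] at hu
    rcases le_total u ρ' with h3 | h3
    · exact conn_single hcF hρ' (hA c ρ u ρ' hu.1 h3 hρ hρ')
    · exact hIH ρ' u (Finset.mem_Icc.2 ⟨le_rfl, h2⟩) (Finset.mem_Icc.2 ⟨h3, hu.2⟩)
  intro u v hu hv
  exact (conn_symm (haux u hu)).trans (haux v hv)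

lemma good_conn {ρ : V} {ℓ : List C} (hA : IntervalProp A) (h : Good A W K b ρ ℓ) :
    ∀ u v, u ∈ Finset.Icc ρ b → v ∈ Finset.Icc ρ b → ConnectedBy A ℓ.toFinset u v := by
  induction h with
  | last ρ c hc hsub hρ hb =>
      intro u v hu hv
      rw [Finset.mem_Icc] at hu hv
      have hcl : c ∈ ([c] : List C).toFinset := by simp
      rw [mem_supp] at hρ hb
      exact conn_single hcl (hA c ρ u b hu.1 hu.2 hρ hb) (hA c ρ v b hv.1 hv.2 hρ hb)
  | cons ρ ρ' c ℓ hc hsub hρ hρ' hmax h1 h2 tail ih =>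
      have hsubF : ℓ.toFinset ⊆ (c :: ℓ).toFinset := by
        intro d hd; simp only [List.toFinset_cons, Finset.mem_insert]; exact Or.inr hd
      refine conn_glue hA (by simp : c ∈ (c :: ℓ).toFinset) (mem_supp.1 hρ) (mem_supp.1 hρ')
        (le_of_lt h1) (le_of_lt h2) ?_
      intro u v hu hv
      exact connectedBy_mono hsubF (ih u v hu hv)

lemma good_gt {σ : V} {ℓ : List C} (h : Good A W K b σ ℓ) (hσb : σ < b) :
    ∀ d ∈ ℓ, ∃ w ∈ supp A d, σ < w := by
  induction h with
  | last ρ c hc hsub hρ hb =>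
      intro d hd
      simp only [List.mem_singleton] at hd
      subst hd; exact ⟨b, hb, hσb⟩
  | cons ρ ρ' c ℓ hc hsub hρ hρ' hmax h1 h2 tail ih =>
      intro d hd
      rcases List.mem_cons.1 hd with rfl | hd
      · exact ⟨ρ', hρ', h1⟩
      · obtain ⟨w, hw, h3⟩ := ih h2 d hd
        exact ⟨w, hw, lt_trans h1 h3⟩

lemma good_nodup {ρ : V} {ℓ : List C} (h : Good A W K b ρ ℓ) : ℓ.Nodup := by
  induction h with
  | last ρ c _ _ _ _ => exact List.nodup_singleton c
  | cons ρ ρ' c ℓ hc hsub hρ hρ' hmax h1 h2 tail ih =>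
      refine List.nodup_cons.2 ⟨?_, ih⟩
      intro hmem
      obtain ⟨w, hw, h3⟩ := good_gt tail h2 c hmem
      exact absurd (hmax w hw) (not_le.2 h3)

lemma good_split {ρ : V} {ℓ : List C} (hA : IntervalProp A) (h : Good A W K b ρ ℓ) :
    ∀ n, 0 < n → n < ℓ.length → ∃ σ, ρ < σ ∧ σ < b ∧ Good A W K b σ (ℓ.drop n) ∧
      (∀ u v, u ∈ Finset.Icc ρ σ → v ∈ Finset.Icc ρ σ →
        ConnectedBy A (ℓ.take n).toFinset u v) := by
  induction h with
  | last ρ c _ _ _ _ =>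
      intro n h0 hlen
      simp only [List.length_singleton] at hlen
      omega
  | cons ρ ρ' c ℓ hc hsub hρ hρ' hmax h1 h2 tail ih =>
      intro n h0 hlen
      rcases n with - | m
      · omega
      rcases Nat.eq_zero_or_pos m with rfl | hm
      · refine ⟨ρ', h1, h2, tail, ?_⟩
        intro u v hu hv
        rw [Finset.mem_Icc] at hu hv
        rw [mem_supp] at hρ hρ'
        have hcl : c ∈ (List.take 1 (c :: ℓ)).toFinset := by simp
        exact conn_single hcl (hA c ρ u ρ' hu.1 hu.2 hρ hρ')
          (hA c ρ v ρ' hv.1 hv.2 hρ hρ')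
      · simp only [List.length_cons] at hlen
        obtain ⟨σ, hρ'σ, hσb, hgood, hconn⟩ := ih m hm (by omega)
        refine ⟨σ, lt_trans h1 hρ'σ, hσb, by rw [List.drop_succ_cons]; exact hgood, ?_⟩
        rw [List.take_succ_cons]
        have hsubF : (List.take m ℓ).toFinset ⊆ (c :: List.take m ℓ).toFinset := by
          intro d hd; simp only [List.toFinset_cons, Finset.mem_insert]; exact Or.inr hd
        refine conn_glue hA (by simp : c ∈ (c :: List.take m ℓ).toFinset)
          (mem_supp.1 hρ) (mem_supp.1 hρ') (le_of_lt h1) (le_of_lt hρ'σ) ?_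
        intro u v hu hv
        exact connectedBy_mono hsubF (hconn u v hu hv)

end GoodChain


section Exists

variable [Fintype V] [LinearOrder V] [DecidableEq C] [LocallyFiniteOrder V]
variable {A : V → Finset C} {W : Finset C}

lemma supp_sub_comp {K : Finset V}
    (hKclosed : ∀ u v, u ∈ K → ConnectedBy A W u v → v ∈ K)
    {c : C} (hc : c ∈ W) {v : V} (hv : c ∈ A v) (hvK : v ∈ K) : supp A c ⊆ K := by
  intro w hw
  exact hKclosed v w hvK (conn_single hc hv (mem_supp.1 hw))

lemma good_exists (hA : IntervalProp A) {K : Finset V} {b : V}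
    (hKconn : ∀ u v, u ∈ K → v ∈ K → ConnectedBy A W u v)
    (hKclosed : ∀ u v, u ∈ K → ConnectedBy A W u v → v ∈ K)
    (hKcov : ∀ v ∈ K, (A v ∩ W).Nonempty)
    (hbK : b ∈ K) (hKleb : ∀ w ∈ K, w ≤ b) :
    ∀ (n : ℕ) (ρ : V), ρ ∈ K → (Finset.Icc ρ b).card ≤ n → ∃ ℓ, Good A W K b ρ ℓ := by
  intro n
  induction n with
  | zero =>
      intro ρ hρK hcard
      exfalso
      have h1 : ρ ∈ Finset.Icc ρ b := Finset.mem_Icc.2 ⟨le_rfl, hKleb ρ hρK⟩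
      have h2 := Finset.card_pos.2 ⟨ρ, h1⟩
      omega
  | succ n IH =>
      intro ρ hρK hcard
      by_cases hcb : ∃ c, c ∈ W ∧ c ∈ A ρ ∧ c ∈ A b
      · obtain ⟨c, hcW, hcρ, hcbmem⟩ := hcb
        exact ⟨[c], Good.last ρ c hcW (supp_sub_comp hKclosed hcW hcρ hρK)
          (mem_supp.2 hcρ) (mem_supp.2 hcbmem)⟩
      · have hρb : ρ ≠ b := by
          rintro rfl
          obtain ⟨c, hc⟩ := hKcov ρ hρK
          rw [Finset.mem_inter] at hc
          exact hcb ⟨c, hc.2, hc.1, hc.1⟩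
        have hρltb : ρ < b := lt_of_le_of_ne (hKleb ρ hρK) hρb
        have hNne : (K.filter (fun w => ρ < w)).Nonempty :=
          ⟨b, Finset.mem_filter.2 ⟨hbK, hρltb⟩⟩
        set ρ'' := (K.filter (fun w => ρ < w)).min' hNne with hρ''def
        have hρ''mem := Finset.min'_mem _ hNne
        rw [← hρ''def, Finset.mem_filter] at hρ''mem
        have hnb : ∀ w ∈ K, ρ < w → ρ'' ≤ w := fun w hw hlt =>
          Finset.min'_le _ w (Finset.mem_filter.2 ⟨hw, hlt⟩)
        obtain ⟨c, hcW, hcρ, hcρ''⟩ := crossing hA hKclosed hρK hρ''mem.2 hnb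
          (hKconn ρ ρ'' hρK hρ''mem.1)
        have hsub : supp A c ⊆ K := supp_sub_comp hKclosed hcW hcρ hρK
        have hsne : (supp A c).Nonempty := ⟨ρ, mem_supp.2 hcρ⟩
        set ρ' := (supp A c).max' hsne with hρ'def
        have hρ'mem : ρ' ∈ supp A c := Finset.max'_mem _ hsne
        have hρρ' : ρ < ρ' := lt_of_lt_of_le hρ''mem.2 (Finset.le_max' _ _ (mem_supp.2 hcρ''))
        have hρ'K : ρ' ∈ K := hsub hρ'mem
        have hρ'b : ρ' ≤ b := hKleb _ hρ'K
        have hρ'ltb : ρ' < b := by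
          refine lt_of_le_of_ne hρ'b ?_
          rintro rfl
          exact hcb ⟨c, hcW, hcρ, mem_supp.1 hρ'mem⟩
        have hcard' : (Finset.Icc ρ' b).card ≤ n := by
          have hss : Finset.Icc ρ' b ⊂ Finset.Icc ρ b := by
            refine ⟨Finset.Icc_subset_Icc_left (le_of_lt hρρ'), ?_⟩
            intro hss
            have h3 := hss (Finset.mem_Icc.2 ⟨le_rfl, le_of_lt hρltb⟩)
            rw [Finset.mem_Icc] at h3
            exact absurd h3.1 (not_le.2 hρρ')
          have := Finset.card_lt_card hss
          omega
        obtain ⟨ℓ', hgood⟩ := IH ρ' hρ'K hcard'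
        exact ⟨c :: ℓ', Good.cons ρ ρ' c ℓ' hcW hsub (mem_supp.2 hcρ) hρ'mem
          (fun w hw => Finset.le_max' _ w hw) hρρ' hρ'ltb hgood⟩

/-- The candidates whose (nonempty) support lies inside `K`. -/
def candsOf (A : V → Finset C) (W : Finset C) (K : Finset V) : Finset C :=
  W.filter (fun c => (supp A c).Nonempty ∧ supp A c ⊆ K)

/-- The per-component split package. -/
lemma comp_package (hA : IntervalProp A) (u₀ : V) (hcov : (A u₀ ∩ W).Nonempty) :
    ∃ (P S : Finset C) (X Y : Finset V),
      X ⊆ compOf A W u₀ ∧ Y ⊆ compOf A W u₀ ∧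
      (∀ u v, u ∈ X → v ∈ X → ConnectedBy A P u v) ∧
      (∀ u v, u ∈ Y → v ∈ Y → ConnectedBy A S u v) ∧
      (X.card + Y.card = (compOf A W u₀).card + 1 ∨
        (X.card = (compOf A W u₀).card ∧ Y.card = 0)) ∧
      S.card ≤ P.card ∧ P.card ≤ S.card + 1 ∧
      P.card + S.card ≤ (candsOf A W (compOf A W u₀)).card := by
  classical
  set K := compOf A W u₀ with hKdef
  have hu₀K : u₀ ∈ K := self_mem_compOf
  have hKconn : ∀ u v, u ∈ K → v ∈ K → ConnectedBy A W u v := by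
    intro u v hu hv
    rw [hKdef, mem_compOf] at hu hv
    exact (conn_symm hu).trans hv
  have hKclosed : ∀ u v, u ∈ K → ConnectedBy A W u v → v ∈ K := by
    intro u v hu hc
    rw [hKdef, mem_compOf] at hu ⊢
    exact hu.trans hc
  have hKcov : ∀ v ∈ K, (A v ∩ W).Nonempty := by
    intro v hv
    rw [hKdef, mem_compOf] at hv
    by_cases hne : u₀ = v
    · subst hne; exact hcov
    · exact covered_tgt hv hne
  have hKne : K.Nonempty := ⟨u₀, hu₀K⟩
  set a := K.min' hKne with hadef
  set b := K.max' hKne with hbdef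
  have haK : a ∈ K := Finset.min'_mem _ _
  have hbK : b ∈ K := Finset.max'_mem _ _
  have hKleb : ∀ w ∈ K, w ≤ b := fun w hw => Finset.le_max' _ _ hw
  have hKgea : ∀ w ∈ K, a ≤ w := fun w hw => Finset.min'_le _ _ hw
  have hKicc : K = Finset.Icc a b := by
    apply Finset.Subset.antisymm
    · intro w hw
      exact Finset.mem_Icc.2 ⟨hKgea w hw, hKleb w hw⟩
    · intro w hw
      rw [Finset.mem_Icc] at hw
      exact hKclosed a w haK (conn_between hA (hKconn a b haK hbK) hw.1 hw.2)
  obtain ⟨ℓ, hgood⟩ := good_exists hA hKconn hKclosed hKcov hbK hKleb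
    (Finset.Icc a b).card a haK le_rfl
  have hnodup := good_nodup hgood
  have hlen_card : ℓ.toFinset.card = ℓ.length := by
    rw [List.card_toFinset, hnodup.dedup]
  have hsub_cands : ℓ.toFinset ⊆ candsOf A W K := by
    intro c hc
    rw [List.mem_toFinset] at hc
    obtain ⟨h1, h2, h3⟩ := good_mem hgood c hc
    exact Finset.mem_filter.2 ⟨h1, h3, h2⟩
  have hlen_le : ℓ.length ≤ (candsOf A W K).card := by
    rw [← hlen_card]; exact Finset.card_le_card hsub_cands
  have hne : ℓ ≠ [] := by cases hgood <;> simp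
  have hlen_pos : 0 < ℓ.length := List.length_pos_iff.2 hne
  by_cases hs1 : ℓ.length = 1
  · refine ⟨ℓ.toFinset, ∅, K, ∅, Finset.Subset.refl K, Finset.empty_subset K,
      ?_, ?_, ?_, ?_, ?_, ?_⟩
    · intro u v hu hv
      rw [hKicc] at hu hv
      exact good_conn hA hgood u v hu hv
    · intro u v hu; exact absurd hu (Finset.notMem_empty u)
    · exact Or.inr ⟨rfl, Finset.card_empty⟩
    · simp
    · simp [hlen_card, hs1]
    · rw [Finset.card_empty, hlen_card]
      omega
  · set m := (ℓ.length + 1) / 2 with hmdef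
    have hm0 : 0 < m := by omega
    have hmlen : m < ℓ.length := by omega
    obtain ⟨σ, haσ, hσb, hgoodS, hconnP⟩ := good_split hA hgood m hm0 hmlen
    have htake_nodup : (ℓ.take m).Nodup := (List.take_sublist m ℓ).nodup hnodup
    have hdrop_nodup : (ℓ.drop m).Nodup := (List.drop_sublist m ℓ).nodup hnodup
    have hPcard : (ℓ.take m).toFinset.card = m := by
      rw [List.card_toFinset, htake_nodup.dedup, List.length_take]
      omega
    have hScard : (ℓ.drop m).toFinset.card = ℓ.length - m := by
      rw [List.card_toFinset, hdrop_nodup.dedup, List.length_drop]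
    refine ⟨(ℓ.take m).toFinset, (ℓ.drop m).toFinset, Finset.Icc a σ, Finset.Icc σ b,
      ?_, ?_, hconnP, ?_, ?_, ?_, ?_, ?_⟩
    · rw [hKicc]; exact Finset.Icc_subset_Icc_right (le_of_lt hσb)
    · rw [hKicc]; exact Finset.Icc_subset_Icc_left (le_of_lt haσ)
    · intro u v hu hv
      exact good_conn hA hgoodS u v hu hv
    · left
      have hXY : Finset.Icc a σ ∪ Finset.Icc σ b = Finset.Icc a b := by
        ext w
        simp only [Finset.mem_union, Finset.mem_Icc]
        constructor
        · rintro (⟨h1, h2⟩ | ⟨h1, h2⟩)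
          · exact ⟨h1, le_trans h2 (le_of_lt hσb)⟩
          · exact ⟨le_trans (le_of_lt haσ) h1, h2⟩
        · rintro ⟨h1, h2⟩
          rcases le_total w σ with h3 | h3
          · exact Or.inl ⟨h1, h3⟩
          · exact Or.inr ⟨h3, h2⟩
      have hXYi : Finset.Icc a σ ∩ Finset.Icc σ b = {σ} := by
        ext w
        simp only [Finset.mem_inter, Finset.mem_Icc, Finset.mem_singleton]
        constructor
        · rintro ⟨⟨-, h2⟩, ⟨h3, -⟩⟩
          exact le_antisymm h2 h3
        · rintro rfl
          exact ⟨⟨le_of_lt haσ, le_rfl⟩, le_rfl, le_of_lt hσb⟩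
      have hcui := Finset.card_union_add_card_inter (Finset.Icc a σ) (Finset.Icc σ b)
      rw [hXY, hXYi, Finset.card_singleton, hKicc] at *
      omega
    · rw [hPcard, hScard]; omega
    · rw [hPcard, hScard]; omega
    · rw [hPcard, hScard]; omega

end Exists

section Numeric

lemma two_choose_two (n : ℕ) : 2 * n.choose 2 = n * (n - 1) := by
  rcases n with - | m
  · simp
  · have hd : 2 ∣ (m + 1) * m := by
      have h := Nat.even_mul_succ_self m
      rw [mul_comm] at h
      exact h.two_dvd
    rw [Nat.choose_two_right, Nat.succ_sub_one, Nat.mul_div_cancel' hd]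

lemma N1 {x y L : ℕ} (h : x + y = L + 1 ∨ (x = L ∧ y = 0)) :
    L.choose 2 ≤ 2 * (x.choose 2 + y.choose 2) := by
  rcases h with h | ⟨rfl, rfl⟩
  · rcases x with - | a
    · have hy : y = L + 1 := by omega
      subst hy
      have h1 : L.choose 2 ≤ (L + 1).choose 2 := Nat.choose_le_choose 2 (Nat.le_succ L)
      omega
    · rcases y with - | b
      · have hx : a + 1 = L + 1 := by omega
        have hx' : a = L := by omega
        subst hx'
        have h1 : a.choose 2 ≤ (a + 1).choose 2 := Nat.choose_le_choose 2 (Nat.le_succ a)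
        omega
      · have hL : L = a + b + 1 := by omega
        subst hL
        have e2 : 2 * ((a + 1).choose 2) = (a + 1) * a := by
          rw [two_choose_two]; simp
        have e3 : 2 * ((b + 1).choose 2) = (b + 1) * b := by
          rw [two_choose_two]; simp
        have eL : 2 * ((a + b + 1).choose 2) = (a + b + 1) * (a + b) := by
          rw [two_choose_two]; simp
        have key : (a + b + 1) * (a + b) ≤ 2 * ((a + 1) * a + (b + 1) * b) := by
          nlinarith [two_mul_le_add_sq a b]
        omega
  · omega

lemma plus_bound {x y L : ℕ} (h : x + y = L + 1 ∨ (x = L ∧ y = 0)) :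
    L.choose 2 + (L.choose 2 - 4 * y.choose 2) ≤ 4 * max (x.choose 2) (y.choose 2) := by
  have h1 := N1 h
  have h2 : x.choose 2 ≤ max (x.choose 2) (y.choose 2) := le_max_left _ _
  have h3 : y.choose 2 ≤ max (x.choose 2) (y.choose 2) := le_max_right _ _
  omega

/-- Selecting (almost) half of a finite set minimizing the selected `f`-weight. -/
lemma half_select {α : Type*} [DecidableEq α] (f : α → ℕ) :
    ∀ (n : ℕ) (s : Finset α), s.card ≤ n → ∃ B ⊆ s, 2 * B.card ≤ s.card ∧
      s.card ≤ 2 * B.card + 1 ∧ 2 * ∑ x ∈ B, f x ≤ ∑ x ∈ s, f x := by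
  intro n
  induction n with
  | zero =>
      intro s hs
      refine ⟨∅, Finset.empty_subset s, ?_, ?_, ?_⟩ <;> simp <;> omega
  | succ n IH =>
      intro s hs
      by_cases hcard : s.card ≤ 1
      · refine ⟨∅, Finset.empty_subset s, ?_, ?_, ?_⟩ <;> simp <;> omega
      · have hne : s.Nonempty := Finset.card_pos.1 (by omega)
        obtain ⟨M, hM, hMmax⟩ := Finset.exists_max_image s f hne
        have hne' : (s.erase M).Nonempty := by
          rw [← Finset.card_pos, Finset.card_erase_of_mem hM]; omega
        obtain ⟨mm, hmm, -⟩ := Finset.exists_min_image (s.erase M) f hne'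
        set s'' := (s.erase M).erase mm with hs''
        have hcard'' : s''.card = s.card - 2 := by
          rw [hs'', Finset.card_erase_of_mem hmm, Finset.card_erase_of_mem hM]
          omega
        obtain ⟨B, hBsub, hB1, hB2, hB3⟩ := IH s'' (by omega)
        have hmmB : mm ∉ B := fun hc => (Finset.notMem_erase mm _) (hBsub hc)
        have hmm_s : mm ∈ s := Finset.mem_of_mem_erase hmm
        refine ⟨insert mm B, ?_, ?_, ?_, ?_⟩
        · intro x hx
          rcases Finset.mem_insert.1 hx with rfl | hx
          · exact hmm_s
          · exact Finset.mem_of_mem_erase (Finset.mem_of_mem_erase (hBsub hx))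
        · rw [Finset.card_insert_of_notMem hmmB]; omega
        · rw [Finset.card_insert_of_notMem hmmB]; omega
        · rw [Finset.sum_insert hmmB]
          have hsum1 : ∑ x ∈ s.erase M, f x + f M = ∑ x ∈ s, f x :=
            Finset.sum_erase_add s f hM
          have hsum2 : ∑ x ∈ s'', f x + f mm = ∑ x ∈ s.erase M, f x :=
            Finset.sum_erase_add _ f hmm
          have hfmM : f mm ≤ f M := hMmax mm hmm_s
          omega

end Numeric

section Counting

variable [Fintype V] [DecidableEq C]

/-- The set of connected non-diagonal pairs, as a finset. -/
def consPairs (A : V → Finset C) (W : Finset C) : Finset (Sym2 V) :=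
  @Finset.filter _ (fun p : Sym2 V =>
    ¬ p.IsDiag ∧ ∃ u v : V, p = s(u, v) ∧ ConnectedBy A W u v)
    (Classical.decPred _) Finset.univ

lemma mem_consPairs {A : V → Finset C} {W : Finset C} {p : Sym2 V} :
    p ∈ consPairs A W ↔
      (¬ p.IsDiag ∧ ∃ u v : V, p = s(u, v) ∧ ConnectedBy A W u v) := by
  simp [consPairs, Finset.mem_filter]

lemma consScore_eq (A : V → Finset C) (W : Finset C) :
    consScore A W = (consPairs A W).card := by
  rw [consScore, ← Set.ncard_coe_finset]
  congr 1
  ext p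
  simp [consPairs]

lemma card_pairsIn [DecidableEq V] (X : Finset V) :
    (X.sym2.filter (fun p => ¬ p.IsDiag)).card = X.card.choose 2 := by
  classical
  have h1 := Finset.card_filter_add_card_filter_not
    (s := X.sym2) (p := fun p : Sym2 V => p.IsDiag)
  have h2 : X.sym2.filter (fun p : Sym2 V => p.IsDiag) = X.image Sym2.diag := by
    ext p
    simp only [Finset.mem_filter, Finset.mem_image, Finset.mem_sym2_iff]
    constructor
    · rintro ⟨hmem, hdiag⟩
      obtain ⟨a, rfl⟩ : p ∈ Set.range Sym2.diag := by rw [Sym2.range_diag]; exact hdiag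
      exact ⟨a, hmem a (Sym2.mem_mk_left a a), rfl⟩
    · rintro ⟨a, ha, rfl⟩
      refine ⟨?_, Sym2.diag_isDiag a⟩
      intro b hb
      rcases Sym2.mem_iff.1 hb with rfl | rfl <;> exact ha
  have h3 : (X.image Sym2.diag).card = X.card :=
    Finset.card_image_of_injective X Sym2.diag_injective
  have h4 : X.sym2.card = Nat.choose (X.card + 1) 2 := Finset.card_sym2 X
  have h5 : (X.card + 1).choose 2 = X.card.choose 1 + X.card.choose 2 :=
    Nat.choose_succ_succ X.card 1
  rw [Nat.choose_one_right] at h5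
  rw [h2, h3] at h1
  have h6 : (X.sym2.filter fun a => ¬ a.IsDiag).card =
      (X.sym2.filter fun p : Sym2 V => ¬ p.IsDiag).card := rfl
  omega

end Counting

section QuarterCore

variable [Fintype V] [LinearOrder V] [LocallyFiniteOrder V] [DecidableEq C]

lemma quarter_core (A : V → Finset C) (hA : IntervalProp A) (W : Finset C)
    (hWeven : Even W.card) :
    ∃ H : Finset C, 2 * H.card ≤ W.card ∧ consScore A W ≤ 4 * consScore A H := by
  classical
  set comps := (Finset.univ.filter (fun v : V => (A v ∩ W).Nonempty)).image (compOf A W)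
    with hcomps
  have hcomps_cov : ∀ K ∈ comps, ∃ u₀, (A u₀ ∩ W).Nonempty ∧ K = compOf A W u₀ := by
    intro K hK
    rw [hcomps, Finset.mem_image] at hK
    obtain ⟨u₀, hu₀, rfl⟩ := hK
    rw [Finset.mem_filter] at hu₀
    exact ⟨u₀, hu₀.2, rfl⟩
  have hcomps_disj : ∀ K₁ ∈ comps, ∀ K₂ ∈ comps, K₁ ≠ K₂ → Disjoint K₁ K₂ := by
    intro K₁ h₁ K₂ h₂ hne
    obtain ⟨u₁, -, rfl⟩ := hcomps_cov K₁ h₁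
    obtain ⟨u₂, -, rfl⟩ := hcomps_cov K₂ h₂
    rw [Finset.disjoint_left]
    intro w hw₁ hw₂
    rw [mem_compOf] at hw₁ hw₂
    exact hne ((compOf_eq_of_conn hw₁).trans (compOf_eq_of_conn hw₂).symm)
  have hpkg : ∀ K : Finset V, ∃ (P S : Finset C) (X Y : Finset V), K ∈ comps →
      (X ⊆ K ∧ Y ⊆ K ∧
      (∀ u v, u ∈ X → v ∈ X → ConnectedBy A P u v) ∧
      (∀ u v, u ∈ Y → v ∈ Y → ConnectedBy A S u v) ∧
      (X.card + Y.card = K.card + 1 ∨ (X.card = K.card ∧ Y.card = 0)) ∧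
      S.card ≤ P.card ∧ P.card ≤ S.card + 1 ∧
      P.card + S.card ≤ (candsOf A W K).card) := by
    intro K
    by_cases hK : K ∈ comps
    · obtain ⟨u₀, hu₀, rfl⟩ := hcomps_cov K hK
      obtain ⟨P, S, X, Y, h1, h2, h3, h4, h5, h6, h7, h8⟩ := comp_package hA u₀ hu₀
      exact ⟨P, S, X, Y, fun _ => ⟨h1, h2, h3, h4, h5, h6, h7, h8⟩⟩
    · exact ⟨∅, ∅, ∅, ∅, fun h => absurd h hK⟩
  choose Pf Sf Xf Yf hprops using hpkg
  set sK : Finset V → ℕ := fun K => (Pf K).card + (Sf K).card with hsK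
  set δf : Finset V → ℕ := fun K => K.card.choose 2 - 4 * ((Yf K).card.choose 2) with hδf
  set odds := comps.filter (fun K => ¬ Even (sK K)) with hodds
  obtain ⟨B, hBsub, hB1, hB2, hB3⟩ := half_select δf odds.card odds le_rfl
  have hBcomps : B ⊆ comps := hBsub.trans (Finset.filter_subset _ _)
  set chC : Finset V → Finset C := fun K =>
    if K ∈ B then Sf K
    else if (Xf K).card.choose 2 < (Yf K).card.choose 2 then Sf K else Pf K with hchC
  set chX : Finset V → Finset V := fun K =>
    if K ∈ B then Yf K
    else if (Xf K).card.choose 2 < (Yf K).card.choose 2 then Yf K else Xf K with hchX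
  set H := comps.biUnion chC with hH
  have hcands_disj : ∀ K₁ ∈ comps, ∀ K₂ ∈ comps, K₁ ≠ K₂ →
      Disjoint (candsOf A W K₁) (candsOf A W K₂) := by
    intro K₁ h₁ K₂ h₂ hne
    rw [Finset.disjoint_left]
    intro c hc₁ hc₂
    rw [candsOf, Finset.mem_filter] at hc₁ hc₂
    obtain ⟨v, hv⟩ := hc₁.2.1
    exact Finset.disjoint_left.1 (hcomps_disj K₁ h₁ K₂ h₂ hne)
      (hc₁.2.2 hv) (hc₂.2.2 hv)
  have hcands_sum : ∑ K ∈ comps, (candsOf A W K).card ≤ W.card := by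
    rw [← Finset.card_biUnion hcands_disj]
    refine Finset.card_le_card ?_
    intro c hc
    obtain ⟨K, -, hcK⟩ := Finset.mem_biUnion.1 hc
    exact (Finset.mem_filter.1 hcK).1
  have hsum_sK : ∑ K ∈ comps, sK K ≤ W.card :=
    le_trans (Finset.sum_le_sum (fun K hK => (hprops K hK).2.2.2.2.2.2.2)) hcands_sum
  have hpar : (∑ K ∈ comps, sK K) % 2 = odds.card % 2 := by
    rw [Finset.sum_nat_mod]
    have he : ∑ K ∈ comps, sK K % 2 = odds.card := by
      rw [← Finset.sum_filter_add_sum_filter_not comps (fun K => Even (sK K))]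
      have ha : ∑ K ∈ comps.filter (fun K => Even (sK K)), sK K % 2 = 0 := by
        refine Finset.sum_eq_zero (fun K hK => ?_)
        have h := (Finset.mem_filter.1 hK).2
        rw [Nat.even_iff] at h
        omega
      have hb : ∑ K ∈ comps.filter (fun K => ¬ Even (sK K)), sK K % 2
          = ∑ _K ∈ comps.filter (fun K => ¬ Even (sK K)), 1 := by
        refine Finset.sum_congr rfl (fun K hK => ?_)
        have h := (Finset.mem_filter.1 hK).2
        rw [Nat.even_iff] at h
        omega
      rw [ha, hb, Finset.sum_const, smul_eq_mul, mul_one, zero_add, hodds]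
    rw [he]
  have hbudget : 2 * H.card ≤ W.card := by
    have h1 : H.card ≤ ∑ K ∈ comps, (chC K).card := Finset.card_biUnion_le
    have hmul : ∑ K ∈ comps, 2 * (chC K).card = 2 * ∑ K ∈ comps, (chC K).card :=
      (Finset.mul_sum _ _ _).symm
    have hsum_split : ∑ K ∈ comps.filter (fun K => Even (sK K)), 2 * (chC K).card
        + ∑ K ∈ odds, 2 * (chC K).card = ∑ K ∈ comps, 2 * (chC K).card := by
      rw [hodds]; exact Finset.sum_filter_add_sum_filter_not comps _ _
    have hsum_splitS : ∑ K ∈ comps.filter (fun K => Even (sK K)), sK K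
        + ∑ K ∈ odds, sK K = ∑ K ∈ comps, sK K := by
      rw [hodds]; exact Finset.sum_filter_add_sum_filter_not comps _ _
    have hodds_split : ∑ K ∈ odds \ B, 2 * (chC K).card + ∑ K ∈ B, 2 * (chC K).card
        = ∑ K ∈ odds, 2 * (chC K).card := Finset.sum_sdiff hBsub
    have hodds_splitS : ∑ K ∈ odds \ B, sK K + ∑ K ∈ B, sK K
        = ∑ K ∈ odds, sK K := Finset.sum_sdiff hBsub
    have hbnd_even : ∑ K ∈ comps.filter (fun K => Even (sK K)), 2 * (chC K).card
        ≤ ∑ K ∈ comps.filter (fun K => Even (sK K)), sK K := by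
      refine Finset.sum_le_sum (fun K hK => ?_)
      rw [Finset.mem_filter] at hK
      obtain ⟨hKc, heven⟩ := hK
      have hp := hprops K hKc
      have hKB : K ∉ B := by
        intro hc
        have hx := hBsub hc
        rw [hodds, Finset.mem_filter] at hx
        exact hx.2 heven
      have hle : (chC K).card ≤ (Pf K).card := by
        simp only [hchC, if_neg hKB]
        split
        · exact hp.2.2.2.2.2.1
        · exact le_rfl
      have hsKK : sK K = (Pf K).card + (Sf K).card := rfl
      have h6 := hp.2.2.2.2.2.1
      have h7 := hp.2.2.2.2.2.2.1
      rw [Nat.even_iff] at heven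
      omega
    have hbnd_B : ∑ K ∈ B, 2 * (chC K).card + B.card ≤ ∑ K ∈ B, sK K := by
      have hpt : ∀ K ∈ B, 2 * (chC K).card + 1 ≤ sK K := by
        intro K hK
        have hKo := hBsub hK
        rw [hodds, Finset.mem_filter] at hKo
        have hp := hprops K hKo.1
        have hodd := hKo.2
        rw [Nat.even_iff] at hodd
        have hle : (chC K).card = (Sf K).card := by
          simp only [hchC, if_pos hK]
        have hsKK : sK K = (Pf K).card + (Sf K).card := rfl
        have h6 := hp.2.2.2.2.2.1
        omega
      calc ∑ K ∈ B, 2 * (chC K).card + B.card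
          = ∑ K ∈ B, (2 * (chC K).card + 1) := by
            rw [Finset.sum_add_distrib, Finset.sum_const, smul_eq_mul, mul_one]
        _ ≤ ∑ K ∈ B, sK K := Finset.sum_le_sum hpt
    have hbnd_oddsB : ∑ K ∈ odds \ B, 2 * (chC K).card
        ≤ ∑ K ∈ odds \ B, sK K + (odds \ B).card := by
      calc ∑ K ∈ odds \ B, 2 * (chC K).card
          ≤ ∑ K ∈ odds \ B, (sK K + 1) := by
            refine Finset.sum_le_sum (fun K hK => ?_)
            rw [Finset.mem_sdiff] at hK
            have hKo := hK.1
            rw [hodds, Finset.mem_filter] at hKo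
            have hp := hprops K hKo.1
            have hle : (chC K).card ≤ (Pf K).card := by
              simp only [hchC, if_neg hK.2]
              split
              · exact hp.2.2.2.2.2.1
              · exact le_rfl
            have hsKK : sK K = (Pf K).card + (Sf K).card := rfl
            have h7 := hp.2.2.2.2.2.2.1
            omega
        _ = ∑ K ∈ odds \ B, sK K + (odds \ B).card := by
            rw [Finset.sum_add_distrib, Finset.sum_const, smul_eq_mul, mul_one]
    have hcard_sdiff : (odds \ B).card = odds.card - B.card := Finset.card_sdiff_of_subset hBsub
    have hWpar : W.card % 2 = 0 := Nat.even_iff.1 hWeven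
    omega
  have hupper : consScore A W ≤ ∑ K ∈ comps, K.card.choose 2 := by
    rw [consScore_eq]
    refine le_trans (Finset.card_le_card (?_ :
        consPairs A W ⊆ comps.biUnion (fun K => K.sym2.filter (fun p => ¬ p.IsDiag)))) ?_
    · intro p hp
      rw [mem_consPairs] at hp
      obtain ⟨hd, u, v, rfl, hconn⟩ := hp
      have hne : u ≠ v := fun h => hd (Sym2.mk_isDiag_iff.2 h)
      have hcov : (A u ∩ W).Nonempty := covered_src hconn hne
      refine Finset.mem_biUnion.2 ⟨compOf A W u, ?_, ?_⟩
      · rw [hcomps, Finset.mem_image]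
        exact ⟨u, Finset.mem_filter.2 ⟨Finset.mem_univ u, hcov⟩, rfl⟩
      · rw [Finset.mem_filter]
        exact ⟨Finset.mk_mem_sym2_iff.2 ⟨self_mem_compOf, mem_compOf.2 hconn⟩, hd⟩
    · refine le_trans Finset.card_biUnion_le (le_of_eq ?_)
      exact Finset.sum_congr rfl (fun K _ => card_pairsIn K)
  have hchX_sub : ∀ K ∈ comps, chX K ⊆ K := by
    intro K hK
    have hp := hprops K hK
    by_cases hb : K ∈ B
    · simp only [hchX, if_pos hb]; exact hp.2.1
    · by_cases hlt : (Xf K).card.choose 2 < (Yf K).card.choose 2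
      · simp only [hchX, if_neg hb, if_pos hlt]; exact hp.2.1
      · simp only [hchX, if_neg hb, if_neg hlt]; exact hp.1
  have hch_conn : ∀ K ∈ comps, ∀ u v, u ∈ chX K → v ∈ chX K →
      ConnectedBy A (chC K) u v := by
    intro K hK u v hu hv
    have hp := hprops K hK
    by_cases hb : K ∈ B
    · simp only [hchX, hchC, if_pos hb] at hu hv ⊢
      exact hp.2.2.2.1 u v hu hv
    · by_cases hlt : (Xf K).card.choose 2 < (Yf K).card.choose 2
      · simp only [hchX, hchC, if_neg hb, if_pos hlt] at hu hv ⊢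
        exact hp.2.2.2.1 u v hu hv
      · simp only [hchX, hchC, if_neg hb, if_neg hlt] at hu hv ⊢
        exact hp.2.2.1 u v hu hv
  have hlower : ∑ K ∈ comps, (chX K).card.choose 2 ≤ consScore A H := by
    rw [consScore_eq]
    have hdisjp : ∀ K₁ ∈ comps, ∀ K₂ ∈ comps, K₁ ≠ K₂ →
        Disjoint ((chX K₁).sym2.filter (fun p => ¬ p.IsDiag))
          ((chX K₂).sym2.filter (fun p => ¬ p.IsDiag)) := by
      intro K₁ h₁ K₂ h₂ hne
      rw [Finset.disjoint_left]
      intro p hp₁ hp₂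
      rw [Finset.mem_filter] at hp₁ hp₂
      induction p using Sym2.ind with
      | _ u v =>
        have hu₁ : u ∈ chX K₁ := (Finset.mk_mem_sym2_iff.1 hp₁.1).1
        have hu₂ : u ∈ chX K₂ := (Finset.mk_mem_sym2_iff.1 hp₂.1).1
        exact Finset.disjoint_left.1 (hcomps_disj K₁ h₁ K₂ h₂ hne)
          (hchX_sub K₁ h₁ hu₁) (hchX_sub K₂ h₂ hu₂)
    calc ∑ K ∈ comps, (chX K).card.choose 2
        = ∑ K ∈ comps, ((chX K).sym2.filter (fun p => ¬ p.IsDiag)).card :=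
          Finset.sum_congr rfl (fun K _ => (card_pairsIn _).symm)
      _ = (comps.biUnion (fun K => (chX K).sym2.filter (fun p => ¬ p.IsDiag))).card :=
          (Finset.card_biUnion hdisjp).symm
      _ ≤ (consPairs A H).card := by
          refine Finset.card_le_card ?_
          intro p hp
          obtain ⟨K, hK, hpK⟩ := Finset.mem_biUnion.1 hp
          rw [Finset.mem_filter] at hpK
          induction p using Sym2.ind with
          | _ u v =>
            have hu : u ∈ chX K := (Finset.mk_mem_sym2_iff.1 hpK.1).1
            have hv : v ∈ chX K := (Finset.mk_mem_sym2_iff.1 hpK.1).2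
            refine mem_consPairs.2 ⟨hpK.2, u, v, rfl, ?_⟩
            refine connectedBy_mono ?_ (hch_conn K hK u v hu hv)
            exact Finset.subset_biUnion_of_mem chC hK
  have hnum : ∑ K ∈ comps, K.card.choose 2 ≤ ∑ K ∈ comps, 4 * (chX K).card.choose 2 := by
    have hptB : ∀ K ∈ B, K.card.choose 2 ≤ 4 * (chX K).card.choose 2 + δf K := by
      intro K hK
      have hδ : δf K = K.card.choose 2 - 4 * ((Yf K).card.choose 2) := rfl
      have hchXK : chX K = Yf K := by simp only [hchX, if_pos hK]
      rw [hchXK]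
      omega
    have hptNB : ∀ K ∈ comps \ B,
        K.card.choose 2 + δf K ≤ 4 * (chX K).card.choose 2 := by
      intro K hK
      rw [Finset.mem_sdiff] at hK
      have hp := hprops K hK.1
      have hpb := plus_bound hp.2.2.2.2.1
      have hδ : δf K = K.card.choose 2 - 4 * ((Yf K).card.choose 2) := rfl
      by_cases hlt : (Xf K).card.choose 2 < (Yf K).card.choose 2
      · have hchXK : chX K = Yf K := by simp only [hchX, if_neg hK.2, if_pos hlt]
        have hmax : max ((Xf K).card.choose 2) ((Yf K).card.choose 2)
            = (Yf K).card.choose 2 := max_eq_right (le_of_lt hlt)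
        rw [hchXK, hmax] at *
        omega
      · have hchXK : chX K = Xf K := by simp only [hchX, if_neg hK.2, if_neg hlt]
        have hmax : max ((Xf K).card.choose 2) ((Yf K).card.choose 2)
            = (Xf K).card.choose 2 := max_eq_left (not_lt.1 hlt)
        rw [hmax] at hpb
        rw [hchXK]
        omega
    have hs1 : ∑ K ∈ comps \ B, (K.card.choose 2 + δf K)
        ≤ ∑ K ∈ comps \ B, 4 * (chX K).card.choose 2 := Finset.sum_le_sum hptNB
    have hs2 : ∑ K ∈ B, K.card.choose 2
        ≤ ∑ K ∈ B, (4 * (chX K).card.choose 2 + δf K) := Finset.sum_le_sum hptB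
    have hδsub : ∑ K ∈ B, δf K ≤ ∑ K ∈ comps \ B, δf K := by
      have hx1 : ∑ K ∈ odds \ B, δf K + ∑ K ∈ B, δf K = ∑ K ∈ odds, δf K :=
        Finset.sum_sdiff hBsub
      have hx2 : ∑ K ∈ odds \ B, δf K ≤ ∑ K ∈ comps \ B, δf K := by
        refine Finset.sum_le_sum_of_subset ?_
        refine Finset.sdiff_subset_sdiff ?_ (Finset.Subset.refl B)
        rw [hodds]; exact Finset.filter_subset _ _
      omega
    have hsplit1 : ∑ K ∈ comps \ B, K.card.choose 2 + ∑ K ∈ B, K.card.choose 2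
        = ∑ K ∈ comps, K.card.choose 2 := Finset.sum_sdiff hBcomps
    have hsplit2 : ∑ K ∈ comps \ B, 4 * (chX K).card.choose 2
        + ∑ K ∈ B, 4 * (chX K).card.choose 2
        = ∑ K ∈ comps, 4 * (chX K).card.choose 2 := Finset.sum_sdiff hBcomps
    have hd1 : ∑ K ∈ comps \ B, (K.card.choose 2 + δf K)
        = ∑ K ∈ comps \ B, K.card.choose 2 + ∑ K ∈ comps \ B, δf K :=
      Finset.sum_add_distrib
    have hd2 : ∑ K ∈ B, (4 * (chX K).card.choose 2 + δf K)
        = ∑ K ∈ B, 4 * (chX K).card.choose 2 + ∑ K ∈ B, δf K :=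
      Finset.sum_add_distrib
    omega
  refine ⟨H, hbudget, ?_⟩
  calc consScore A W ≤ ∑ K ∈ comps, K.card.choose 2 := hupper
    _ ≤ ∑ K ∈ comps, 4 * (chX K).card.choose 2 := hnum
    _ = 4 * ∑ K ∈ comps, (chX K).card.choose 2 := (Finset.mul_sum _ _ _).symm
    _ ≤ 4 * consScore A H := Nat.mul_le_mul_left 4 hlower

end QuarterCore

/-- The main combinatorial lemma: a quarter of the optimal `Cons` with half budget. -/
lemma main_quarter {V C : Type*} [Fintype V] [Fintype C] [DecidableEq V] [DecidableEq C]
    (A : V → Finset C) (hVI : IsVI A) (k : ℕ) (hkeven : Even k)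
    (hkm : k ≤ Fintype.card C) :
    ∃ H : Finset C, 2 * H.card ≤ k ∧ maxScore (consScore A) k ≤ 4 * consScore A H := by
  classical
  obtain ⟨τ, hτ⟩ := hVI
  letI lin : LinearOrder V := LinearOrder.lift' (fun v => τ.symm v) (Equiv.injective τ.symm)
  letI : LocallyFiniteOrder V := Fintype.toLocallyFiniteOrder
  have hA : IntervalProp A := by
    intro c u w v huw hwv hcu hcv
    obtain ⟨i, j, hij⟩ := hτ c
    have hmem : ∀ x : V, c ∈ A x ↔ τ.symm x ∈ Finset.Icc i j := by
      intro x
      constructor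
      · intro hx
        have hx2 : x ∈ Finset.univ.filter (fun v => c ∈ A v) :=
          Finset.mem_filter.2 ⟨Finset.mem_univ x, hx⟩
        rw [hij, Finset.mem_image] at hx2
        obtain ⟨i₀, hi₀, rfl⟩ := hx2
        rwa [Equiv.symm_apply_apply]
      · intro hx
        have hx2 : x ∈ (Finset.Icc i j).image τ :=
          Finset.mem_image.2 ⟨τ.symm x, hx, Equiv.apply_symm_apply τ x⟩
        rw [← hij, Finset.mem_filter] at hx2
        exact hx2.2
    have huw' : τ.symm u ≤ τ.symm w := huw
    have hwv' : τ.symm w ≤ τ.symm v := hwv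
    rw [hmem] at hcu hcv ⊢
    rw [Finset.mem_Icc] at hcu hcv ⊢
    exact ⟨le_trans hcu.1 huw', le_trans hwv' hcv.2⟩
  obtain ⟨Wopt, hWcard, hWeq⟩ := maxScore_exists (consScore A) hkm
  obtain ⟨H, h1, h2⟩ := quarter_core A hA Wopt (by rw [hWcard]; exact hkeven)
  refine ⟨H, ?_, ?_⟩
  · rw [← hWcard]; exact h1
  · rw [hWeq]; exact h2

end VIAux

/-- **`(1/4)`-Cons together with `(1/2)`-AV, `(1/2)`-CC, or `(1/2)`-Pairs on VI
instances.** For every election instance in the VI domain with even committee size `k`,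
and for each of the score functions `AV`, `CC`, and `Pairs`, there exists a feasible
committee (of size exactly `k`) whose `Cons` score is at least one quarter of the
optimal `Cons` score and whose score under the chosen function is at least one half of
the corresponding optimum. -/
theorem vi_quarter_cons_half_scores {V C : Type*} [Fintype V] [Fintype C]
    [DecidableEq V] [DecidableEq C]
    (A : V → Finset C) (k : ℕ) (hk : 0 < k) (hkm : k ≤ Fintype.card C)
    (hkeven : Even k) (hVI : IsVI A) :
    (∃ W : Finset C, W.card = k ∧
        (1 / 4 : ℝ) * (maxScore (consScore A) k : ℝ) ≤ (consScore A W : ℝ) ∧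
        (1 / 2 : ℝ) * (maxScore (avScore A) k : ℝ) ≤ (avScore A W : ℝ)) ∧
    (∃ W : Finset C, W.card = k ∧
        (1 / 4 : ℝ) * (maxScore (consScore A) k : ℝ) ≤ (consScore A W : ℝ) ∧
        (1 / 2 : ℝ) * (maxScore (ccScore A) k : ℝ) ≤ (ccScore A W : ℝ)) ∧
    (∃ W : Finset C, W.card = k ∧
        (1 / 4 : ℝ) * (maxScore (consScore A) k : ℝ) ≤ (consScore A W : ℝ) ∧
        (1 / 2 : ℝ) * (maxScore (pairsScore A) k : ℝ) ≤ (pairsScore A W : ℝ)) := by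
  have hmain := VIAux.main_quarter A hVI k hkeven hkm
  refine ⟨?_, ?_, ?_⟩
  · exact VIAux.combine A k hkm hkeven hmain (avScore A)
      (fun _ _ h => VIAux.avScore_mono A h) (VIAux.avScore_union_le A)
  · exact VIAux.combine A k hkm hkeven hmain (ccScore A)
      (fun _ _ h => VIAux.ccScore_mono A h) (VIAux.ccScore_union_le A)
  · exact VIAux.combine A k hkm hkeven hmain (pairsScore A)
      (fun _ _ h => VIAux.pairsScore_mono A h) (VIAux.pairsScore_union_le A)
end
end

section
/- Let ℰ = (V, A, k) be an election instance in the voter interval (VI) domain with k even. Then there exists a feasible committee W (|W| = k) such that Cons(W) ≥ (1/4) · max{Cons(W') : |W'| = k} and W satisfies (1/2)-EJR. -/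
noncomputable section

/-- A committee `W` satisfies `α`-EJR (approximate extended justified representation). -/
def EJRsat {V C : Type*} [Fintype V] [Fintype C] [DecidableEq C]
    (A : V → Finset C) (k : ℕ) (α : ℝ) (W : Finset C) : Prop :=
  ∀ ℓ : ℕ, 1 ≤ ℓ → ℓ ≤ k → ∀ S : Finset V,
    (ℓ : ℝ) / (k : ℝ) * (Fintype.card V : ℝ) ≤ α * (S.card : ℝ) →
    ℓ ≤ (Finset.univ.filter fun c : C => ∀ v ∈ S, c ∈ A v).card →
    ∃ v ∈ S, ℓ ≤ (W ∩ A v).card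

open Finset

attribute [local instance] Classical.propDecidable

set_option linter.unusedSectionVars false




/-- number of `<`-ordered pairs in a finset equals `card.choose 2`. -/
lemma card_lt_pairs {α : Type*} [LinearOrder α] [DecidableEq α]
    [DecidablePred fun p : α × α => p.1 < p.2] (s : Finset α) :
    ((s ×ˢ s).filter fun p => p.1 < p.2).card = s.card.choose 2 := by
  classical
  rw [← Finset.card_powersetCard 2 s]
  apply Finset.card_bij (fun p _ => ({p.1, p.2} : Finset α))
  · rintro ⟨a, b⟩ hp
    simp only [Finset.mem_filter, Finset.mem_product] at hp
    rw [Finset.mem_powersetCard]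
    refine ⟨?_, ?_⟩
    · intro x hx
      rcases Finset.mem_insert.1 hx with h | h
      · subst h; exact hp.1.1
      · rw [Finset.mem_singleton] at h; subst h; exact hp.1.2
    · rw [Finset.card_insert_of_notMem (by simp [hp.2.ne]), Finset.card_singleton]
  · rintro ⟨a, b⟩ ha ⟨c, d⟩ hc h
    simp only [Finset.mem_filter, Finset.mem_product] at ha hc
    have hac : a ∈ ({c, d} : Finset α) := by rw [← h]; simp
    have hbd : b ∈ ({c, d} : Finset α) := by rw [← h]; simp
    have hca : c ∈ ({a, b} : Finset α) := by rw [h]; simp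
    simp only [Finset.mem_insert, Finset.mem_singleton] at hac hbd hca
    have hab := ha.2; have hcd := hc.2
    rcases hac with h1 | h1
    · rcases hbd with h2 | h2
      · exact absurd (h1.trans h2.symm) hab.ne
      · simp [Prod.ext_iff, h1, h2]
    · rcases hbd with h2 | h2
      · exact absurd ((h2 ▸ hab).trans (h1 ▸ hcd)) (lt_irrefl _)
      · exact absurd (h1.trans h2.symm) hab.ne
  · intro t ht
    rw [Finset.mem_powersetCard] at ht
    obtain ⟨a, b, hab, rfl⟩ := Finset.card_eq_two.1 ht.2
    rcases hab.lt_or_gt with h | h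
    · exact ⟨(a, b), by simp [Finset.mem_filter, h, ht.1 (by simp : a ∈ _), ht.1 (by simp : b ∈ _)], rfl⟩
    · refine ⟨(b, a), by simp [Finset.mem_filter, h, ht.1 (by simp : a ∈ _), ht.1 (by simp : b ∈ _)], ?_⟩
      exact Finset.pair_comm b a

/-- split a finset into a low-key half and the rest. -/
lemma exists_min_half {C : Type*} [DecidableEq C] (key : C → ℕ) (s : Finset C) :
    ∀ m, m ≤ s.card → ∃ P ⊆ s, P.card = m ∧ ∀ c ∈ P, ∀ d ∈ s \ P, key c ≤ key d := by
  intro m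
  induction m with
  | zero => intro _; exact ⟨∅, Finset.empty_subset _, rfl, by simp⟩
  | succ m ih =>
    intro hm
    obtain ⟨P, hPs, hPcard, hPkey⟩ := ih (Nat.le_of_succ_le hm)
    have hne : (s \ P).Nonempty := by
      rw [← Finset.card_pos, Finset.card_sdiff_of_subset hPs, hPcard]
      omega
    obtain ⟨d₀, hd₀, hd₀min⟩ := Finset.exists_min_image (s \ P) key hne
    have hd₀s : d₀ ∈ s := (Finset.mem_sdiff.1 hd₀).1
    have hd₀P : d₀ ∉ P := (Finset.mem_sdiff.1 hd₀).2
    refine ⟨insert d₀ P, ?_, ?_, ?_⟩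
    · exact Finset.insert_subset hd₀s hPs
    · rw [Finset.card_insert_of_notMem hd₀P, hPcard]
    · intro c hc d hd
      have hd' : d ∈ s \ P := by
        rw [Finset.mem_sdiff] at hd ⊢
        exact ⟨hd.1, fun h => hd.2 (Finset.mem_insert_of_mem h)⟩
      rcases Finset.mem_insert.1 hc with rfl | hc
      · exact hd₀min d hd'
      · exact hPkey c hc d hd'



/-- Greedy EJR construction. -/
lemma greedyEJR {V C : Type*} [Fintype V] [Fintype C] [DecidableEq V] [DecidableEq C]
    (A : V → Finset C) (k' : ℕ) (hV : 0 < Fintype.card V) :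
    ∀ N : ℕ, ∀ R : Finset V, R.card ≤ N → ∃ W2 : Finset C,
      W2.card * Fintype.card V ≤ k' * R.card ∧
      ∀ ℓ : ℕ, 1 ≤ ℓ → ∀ S : Finset V, S ⊆ R →
        ℓ * Fintype.card V ≤ k' * S.card →
        ℓ ≤ (Finset.univ.filter fun c : C => ∀ v ∈ S, c ∈ A v).card →
        ∃ v ∈ S, ℓ ≤ (W2 ∩ A v).card := by
  intro N
  induction N with
  | zero =>
    intro R hR
    have hR0 : R = ∅ := Finset.card_eq_zero.1 (Nat.le_zero.1 hR)
    subst hR0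
    refine ⟨∅, by simp, ?_⟩
    intro ℓ hℓ S hS h1 _
    have : S = ∅ := Finset.subset_empty.1 hS
    subst this
    simp at h1
    omega
  | succ N ih =>
    intro R hR
    set n := Fintype.card V with hn
    set Elig : ℕ → Prop := fun ℓ => 0 < ℓ ∧ ∃ S : Finset V, S ⊆ R ∧
      ℓ * n ≤ k' * S.card ∧ ℓ ≤ (Finset.univ.filter fun c : C => ∀ v ∈ S, c ∈ A v).card
      with hElig
    set L := Nat.findGreatest Elig (Fintype.card C) with hL
    by_cases hL0 : 0 < L
    · have hspec : Elig L := Nat.findGreatest_of_ne_zero (P := Elig) rfl (by omega)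
      obtain ⟨hLpos, S', hS'R, hS'size, hS'common⟩ := hspec
      have hS'pos : 0 < S'.card := by
        rcases Nat.eq_zero_or_pos S'.card with h | h
        · exfalso
          rw [h, Nat.mul_zero] at hS'size
          have := Nat.mul_pos hLpos hV
          omega
        · exact h
      have hS'R' : S'.card ≤ R.card := Finset.card_le_card hS'R
      have hRcard : (R \ S').card = R.card - S'.card := Finset.card_sdiff_of_subset hS'R
      have hRcard' : (R \ S').card ≤ N := by omega
      obtain ⟨W2', hW2'bud, hW2'sat⟩ := ih (R \ S') hRcard'
      obtain ⟨T, hTsub, hTcard⟩ := Finset.exists_subset_card_eq hS'common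
      refine ⟨W2' ∪ T, ?_, ?_⟩
      · calc (W2' ∪ T).card * n ≤ (W2'.card + T.card) * n := by
              exact Nat.mul_le_mul_right _ (Finset.card_union_le _ _)
          _ = W2'.card * n + L * n := by rw [hTcard, add_mul]
          _ ≤ k' * (R \ S').card + k' * S'.card := by exact Nat.add_le_add hW2'bud hS'size
          _ = k' * R.card := by rw [← Nat.mul_add]; congr 1; omega
      · intro ℓ hℓ S hSR hsize hcommon
        by_cases hcase : ℓ ≤ L
        · by_cases hint : (S ∩ S').Nonempty
          · obtain ⟨v, hv⟩ := hint
            rw [Finset.mem_inter] at hv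
            refine ⟨v, hv.1, ?_⟩
            have hTA : T ⊆ A v := by
              intro c hc
              have := hTsub hc
              rw [Finset.mem_filter] at this
              exact this.2 v hv.2
            calc ℓ ≤ L := hcase
              _ = T.card := hTcard.symm
              _ = (T ∩ A v).card := by rw [Finset.inter_eq_left.2 hTA]
              _ ≤ ((W2' ∪ T) ∩ A v).card := by
                  exact Finset.card_le_card (Finset.inter_subset_inter
                    Finset.subset_union_right (le_refl _))
          · have hSsub : S ⊆ R \ S' := by
              intro v hv
              rw [Finset.mem_sdiff]
              refine ⟨hSR hv, fun h => hint ⟨v, Finset.mem_inter.2 ⟨hv, h⟩⟩⟩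
            obtain ⟨v, hvS, hvcard⟩ := hW2'sat ℓ hℓ S hSsub hsize hcommon
            refine ⟨v, hvS, le_trans hvcard ?_⟩
            exact Finset.card_le_card (Finset.inter_subset_inter
              Finset.subset_union_left (le_refl _))
        · exfalso
          have hℓC : ℓ ≤ Fintype.card C := by
            calc ℓ ≤ _ := hcommon
              _ ≤ Fintype.card C := by
                  simpa using Finset.card_filter_le (Finset.univ : Finset C) _
          have : ℓ ≤ L := Nat.le_findGreatest hℓC ⟨by omega, S, hSR, hsize, hcommon⟩
          omega
    · refine ⟨∅, by simp, ?_⟩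
      intro ℓ hℓ S hSR hsize hcommon
      exfalso
      have hℓC : ℓ ≤ Fintype.card C := by
        calc ℓ ≤ _ := hcommon
          _ ≤ Fintype.card C := by
              simpa using Finset.card_filter_le (Finset.univ : Finset C) _
      have : ℓ ≤ L := Nat.le_findGreatest hℓC ⟨by omega, S, hSR, hsize, hcommon⟩
      omega



lemma min'_congr {α : Type*} [LinearOrder α] {s t : Finset α} (h : s = t)
    (hs : s.Nonempty) (ht : t.Nonempty) : s.min' hs = t.min' ht := by
  subst h; rfl

lemma two_mul_choose_two (x : ℕ) : 2 * x.choose 2 = x * (x - 1) := by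
  rw [Nat.choose_two_right]
  rcases x with _ | m
  · simp
  · have hdvd : 2 ∣ (m + 1) * m := by
      have := Nat.even_mul_succ_self m
      rw [even_iff_two_dvd] at this
      simpa [Nat.mul_comm] using this
    simp only [Nat.add_sub_cancel]
    exact Nat.mul_div_cancel' hdvd

lemma choose_split {N p q : ℕ} (hp : 1 ≤ p) (hq : 1 ≤ q) (h : N + 1 ≤ p + q) :
    N.choose 2 ≤ 2 * p.choose 2 + 2 * q.choose 2 := by
  rcases N with _ | M
  · simp
  obtain ⟨P, rfl⟩ : ∃ P, p = P + 1 := ⟨p - 1, by omega⟩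
  obtain ⟨Q, rfl⟩ : ∃ Q, q = Q + 1 := ⟨q - 1, by omega⟩
  have e1 := two_mul_choose_two (M + 1)
  have e2 := two_mul_choose_two (P + 1)
  have e3 := two_mul_choose_two (Q + 1)
  simp only [Nat.add_sub_cancel] at e1 e2 e3
  have hM : M ≤ P + Q + 1 := by omega
  have key : (M + 1) * M ≤ 2 * ((P + 1) * P) + 2 * ((Q + 1) * Q) := by
    zify
    have hM' : (M : ℤ) ≤ (P : ℤ) + (Q : ℤ) + 1 := by exact_mod_cast hM
    nlinarith [sq_nonneg ((P : ℤ) - (Q : ℤ)),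
      mul_nonneg (sub_nonneg.2 hM') (by positivity : (0:ℤ) ≤ (P:ℤ) + Q + M + 2),
      Int.natCast_nonneg M, Int.natCast_nonneg P, Int.natCast_nonneg Q]
  linarith [e1, e2, e3, key]

section VI
variable {V C : Type*} [Fintype V] [Fintype C] [DecidableEq V] [DecidableEq C]

variable (τ : Fin (Fintype.card V) ≃ V) (A : V → Finset C)

/-- supporters of candidate `c`, as positions on the voter line. -/
def supp (c : C) : Finset (Fin (Fintype.card V)) :=
  Finset.univ.filter fun i => c ∈ A (τ i)

/-- one connection step via committee `W`. -/
def RStep (W : Finset C) (i j : Fin (Fintype.card V)) : Prop :=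
  ∃ c ∈ W, i ∈ supp τ A c ∧ j ∈ supp τ A c

/-- connectivity on the voter line. -/
def VRel (W : Finset C) : Fin (Fintype.card V) → Fin (Fintype.card V) → Prop :=
  Relation.ReflTransGen (RStep τ A W)

lemma rstep_iff (W : Finset C) (i j : Fin (Fintype.card V)) :
    RStep τ A W i j ↔ (A (τ i) ∩ A (τ j) ∩ W).Nonempty := by
  constructor
  · rintro ⟨c, hcW, hi, hj⟩
    rw [supp, Finset.mem_filter] at hi hj
    exact ⟨c, by simp [Finset.mem_inter, hi.2, hj.2, hcW]⟩
  · rintro ⟨c, hc⟩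
    simp only [Finset.mem_inter] at hc
    exact ⟨c, hc.2, by simp [supp, Finset.mem_filter, hc.1.1],
      by simp [supp, Finset.mem_filter, hc.1.2]⟩

lemma connectedBy_iff (W : Finset C) (i j : Fin (Fintype.card V)) :
    ConnectedBy A W (τ i) (τ j) ↔ VRel τ A W i j := by
  constructor
  · intro h
    have key : ∀ u v : V, ConnectedBy A W u v → VRel τ A W (τ.symm u) (τ.symm v) := by
      intro u v huv
      induction huv with
      | refl => exact Relation.ReflTransGen.refl
      | tail _ hstep ih =>
        refine Relation.ReflTransGen.tail ih ?_
        rw [rstep_iff]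
        simpa using hstep
    have := key (τ i) (τ j) h
    simpa using this
  · intro h
    induction h with
    | refl => exact Relation.ReflTransGen.refl
    | tail _ hstep ih =>
      refine Relation.ReflTransGen.tail ih ?_
      rw [rstep_iff] at hstep
      exact hstep

lemma rstep_symm {W : Finset C} {i j : Fin (Fintype.card V)}
    (h : RStep τ A W i j) : RStep τ A W j i := by
  obtain ⟨c, hc, h1, h2⟩ := h
  exact ⟨c, hc, h2, h1⟩

lemma vrel_symm {W : Finset C} {i j : Fin (Fintype.card V)}
    (h : VRel τ A W i j) : VRel τ A W j i := by
  induction h with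
  | refl => exact Relation.ReflTransGen.refl
  | tail _ hstep ih => exact Relation.ReflTransGen.head (rstep_symm τ A hstep) ih

lemma vrel_mono {W W' : Finset C} (hWW : W ⊆ W') {i j : Fin (Fintype.card V)}
    (h : VRel τ A W i j) : VRel τ A W' i j := by
  refine Relation.ReflTransGen.mono ?_ _ _ h
  rintro a b ⟨c, hc, h1, h2⟩
  exact ⟨c, hWW hc, h1, h2⟩

/-- convexity of supports, from the VI hypothesis. -/
lemma supp_convex (hconv : ∀ c : C, ∃ i j : Fin (Fintype.card V),
      supp τ A c = Finset.Icc i j)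
    {c : C} {x y z : Fin (Fintype.card V)} (hx : x ∈ supp τ A c) (hy : y ∈ supp τ A c)
    (hxz : x ≤ z) (hzy : z ≤ y) : z ∈ supp τ A c := by
  obtain ⟨i, j, hij⟩ := hconv c
  rw [hij] at hx hy ⊢
  rw [Finset.mem_Icc] at hx hy ⊢
  exact ⟨le_trans hx.1 hxz, le_trans hzy hy.2⟩

variable (hconv : ∀ c : C, ∃ i j : Fin (Fintype.card V), supp τ A c = Finset.Icc i j)

include hconv

/-- connectivity is convex: anything between connected voters is connected to them. -/
lemma vrel_trunc {W : Finset C} {x y z : Fin (Fintype.card V)}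
    (h : VRel τ A W x y) (hz : (x ≤ z ∧ z ≤ y) ∨ (y ≤ z ∧ z ≤ x)) :
    VRel τ A W x z := by
  induction h with
  | refl =>
    have : z = x := by
      rcases hz with ⟨h1, h2⟩ | ⟨h1, h2⟩ <;> exact le_antisymm h2 h1
    subst this
    exact Relation.ReflTransGen.refl
  | @tail w y hxw hstep ih =>
    by_cases hzw : (x ≤ z ∧ z ≤ w) ∨ (w ≤ z ∧ z ≤ x)
    · exact ih hzw
    · have hz' : (w ≤ z ∧ z ≤ y) ∨ (y ≤ z ∧ z ≤ w) := by
        simp only [Fin.le_def] at hz hzw ⊢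
        omega
      obtain ⟨c, hc, hw, hy⟩ := hstep
      have hzc : z ∈ supp τ A c := by
        rcases hz' with ⟨h1, h2⟩ | ⟨h1, h2⟩
        · exact supp_convex τ A hconv hw hy h1 h2
        · exact supp_convex τ A hconv hy hw h1 h2
      exact Relation.ReflTransGen.tail hxw ⟨c, hc, hw, hzc⟩

/-- boundary crossing, upward form. -/
lemma vrel_boundary_up {W : Finset C} {x y m : Fin (Fintype.card V)}
    (h : VRel τ A W x y) (hxm : x ≤ m) (hmy : m < y) :
    ∃ c ∈ W, m ∈ supp τ A c ∧ ∃ w ∈ supp τ A c, m < w := by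
  induction h with
  | refl => exact absurd (lt_of_le_of_lt hxm hmy) (lt_irrefl _)
  | @tail w y hxw hstep ih =>
    by_cases hwm : w ≤ m
    · obtain ⟨c, hc, hw, hy⟩ := hstep
      refine ⟨c, hc, ?_, y, hy, hmy⟩
      exact supp_convex τ A hconv hw hy hwm (le_of_lt hmy)
    · push_neg at hwm
      exact ih hwm

/-- boundary crossing, downward form. -/
lemma vrel_boundary_down {W : Finset C} {x y m : Fin (Fintype.card V)}
    (h : VRel τ A W x y) (hxm : x < m) (hmy : m ≤ y) :
    ∃ c ∈ W, m ∈ supp τ A c ∧ ∃ w ∈ supp τ A c, w < m := by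
  induction h with
  | refl => exact absurd (lt_of_lt_of_le hxm hmy) (lt_irrefl _)
  | @tail w y hxw hstep ih =>
    by_cases hwm : w < m
    · obtain ⟨c, hc, hw, hy⟩ := hstep
      refine ⟨c, hc, ?_, w, hw, hwm⟩
      exact supp_convex τ A hconv hw hy (le_of_lt hwm) hmy
    · push_neg at hwm
      exact ih hwm


/-- key of a candidate: position of the left endpoint of its support interval. -/
def suppKey (c : C) : ℕ :=
  if h : (supp τ A c).Nonempty then ((supp τ A c).min' h : ℕ) else 0

/-- The block decomposition bound: within one connectivity component (rooted at its
minimum `r`, with maximum `b`), the `P`-block at the left end and the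
`(Wo \ P)`-block at the right end overlap, so their sizes sum to more than the
component size. -/
lemma block_bound (Wo P : Finset C) (hP : P ⊆ Wo)
    (hkey : ∀ c ∈ P, ∀ d ∈ Wo \ P, suppKey τ A c ≤ suppKey τ A d)
    (r b : Fin (Fintype.card V))
    (hmin : ∀ z, VRel τ A Wo r z → r ≤ z)
    (hb : VRel τ A Wo r b)
    (hbmax : ∀ z, VRel τ A Wo r z → z ≤ b) :
    (Finset.univ.filter fun z => VRel τ A Wo r z).card + 1 ≤
      (Finset.univ.filter fun z => VRel τ A Wo r z ∧ VRel τ A P r z).card +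
      (Finset.univ.filter fun z => VRel τ A Wo r z ∧ VRel τ A (Wo \ P) z b).card := by
  classical
  set M : Finset (Fin (Fintype.card V)) :=
    Finset.univ.filter fun z => VRel τ A Wo r z ∧ VRel τ A P r z with hM
  set M' : Finset (Fin (Fintype.card V)) :=
    Finset.univ.filter fun z => VRel τ A Wo r z ∧ VRel τ A (Wo \ P) z b with hM'
  have hrM : r ∈ M := by
    simp only [hM, Finset.mem_filter, Finset.mem_univ, true_and]
    exact ⟨Relation.ReflTransGen.refl, Relation.ReflTransGen.refl⟩
  have hbM' : b ∈ M' := by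
    simp only [hM', Finset.mem_filter, Finset.mem_univ, true_and]
    exact ⟨hb, Relation.ReflTransGen.refl⟩
  set m : Fin (Fintype.card V) := M.max' ⟨r, hrM⟩ with hm
  set m' : Fin (Fintype.card V) := M'.min' ⟨b, hbM'⟩ with hm'
  have hmM : m ∈ M := Finset.max'_mem _ _
  have hm'M : m' ∈ M' := Finset.min'_mem _ _
  have hmK : VRel τ A Wo r m ∧ VRel τ A P r m := by
    simpa [hM, Finset.mem_filter] using hmM
  have hm'K : VRel τ A Wo r m' ∧ VRel τ A (Wo \ P) m' b := by
    simpa [hM', Finset.mem_filter] using hm'M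
  have hrm : r ≤ m := hmin m hmK.1
  have hmb : m ≤ b := hbmax m hmK.1
  have hrm' : r ≤ m' := hmin m' hm'K.1
  have hm'b : m' ≤ b := hbmax m' hm'K.1
  -- the crucial overlap claim
  have hoverlap : m' ≤ m := by
    by_contra hcon
    push_neg at hcon  -- m < m'
    have hmltb : m < b := lt_of_lt_of_le hcon hm'b
    obtain ⟨c, hcWo, hmc, w, hwc, hmw⟩ := vrel_boundary_up τ A hconv hb hrm hmltb
    have hwK : VRel τ A Wo r w :=
      Relation.ReflTransGen.tail hmK.1 ⟨c, hcWo, hmc, hwc⟩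
    have hcQ : c ∈ Wo \ P := by
      by_cases hcP : c ∈ P
      · exfalso
        have hwP : VRel τ A P r w :=
          Relation.ReflTransGen.tail hmK.2 ⟨c, hcP, hmc, hwc⟩
        have hwM : w ∈ M := by
          simp only [hM, Finset.mem_filter, Finset.mem_univ, true_and]
          exact ⟨hwK, hwP⟩
        exact absurd (Finset.le_max' M w hwM) (not_le.2 hmw)
      · exact Finset.mem_sdiff.2 ⟨hcWo, hcP⟩
    have hrltm' : r < m' := lt_of_le_of_lt hrm hcon
    obtain ⟨c', hc'Wo, hm'c', w', hw'c', hw'm⟩ := vrel_boundary_down τ A hconv hb hrltm' hm'b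
    have hw'K : VRel τ A Wo r w' :=
      Relation.ReflTransGen.tail hm'K.1 ⟨c', hc'Wo, hm'c', hw'c'⟩
    have hc'P : c' ∈ P := by
      by_contra hc'P
      have hw'Q : VRel τ A (Wo \ P) w' b :=
        Relation.ReflTransGen.head
          ⟨c', Finset.mem_sdiff.2 ⟨hc'Wo, hc'P⟩, hw'c', hm'c'⟩ hm'K.2
      have hw'M : w' ∈ M' := by
        simp only [hM', Finset.mem_filter, Finset.mem_univ, true_and]
        exact ⟨hw'K, hw'Q⟩
      exact absurd (Finset.min'_le M' w' hw'M) (not_le.2 hw'm)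
    -- compare keys
    have hkk : suppKey τ A c' ≤ suppKey τ A c := hkey c' hc'P c hcQ
    have hnec : (supp τ A c).Nonempty := ⟨m, hmc⟩
    have hnec' : (supp τ A c').Nonempty := ⟨m', hm'c'⟩
    rw [suppKey, suppKey, dif_pos hnec, dif_pos hnec'] at hkk
    have h2 : (supp τ A c).min' hnec ≤ m := Finset.min'_le _ m hmc
    have h3 : (supp τ A c').min' hnec' ≤ m := by
      rw [Fin.le_def] at h2 ⊢
      omega
    have hmc' : m ∈ supp τ A c' :=
      supp_convex τ A hconv (Finset.min'_mem _ hnec') hm'c' h3 (le_of_lt hcon)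
    have hm'P : VRel τ A P r m' :=
      Relation.ReflTransGen.tail hmK.2 ⟨c', hc'P, hmc', hm'c'⟩
    have hm'M : m' ∈ M := by
      simp only [hM, Finset.mem_filter, Finset.mem_univ, true_and]
      exact ⟨hm'K.1, hm'P⟩
    exact absurd (Finset.le_max' M m' hm'M) (not_le.2 hcon)
  -- counting
  have hIccM : Finset.Icc r m ⊆ M := by
    intro z hz
    rw [Finset.mem_Icc] at hz
    simp only [hM, Finset.mem_filter, Finset.mem_univ, true_and]
    exact ⟨vrel_trunc τ A hconv hmK.1 (Or.inl hz),
      vrel_trunc τ A hconv hmK.2 (Or.inl hz)⟩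
  have hIccM' : Finset.Icc m' b ⊆ M' := by
    intro z hz
    rw [Finset.mem_Icc] at hz
    simp only [hM', Finset.mem_filter, Finset.mem_univ, true_and]
    refine ⟨vrel_trunc τ A hconv hb (Or.inl ⟨le_trans hrm' hz.1, hz.2⟩), ?_⟩
    have h1 : VRel τ A (Wo \ P) m' z := vrel_trunc τ A hconv hm'K.2 (Or.inl hz)
    exact Relation.ReflTransGen.trans (vrel_symm τ A h1) hm'K.2
  have hKIcc : (Finset.univ.filter fun z => VRel τ A Wo r z) ⊆ Finset.Icc r b := by
    intro z hz
    rw [Finset.mem_filter] at hz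
    rw [Finset.mem_Icc]
    exact ⟨hmin z hz.2, hbmax z hz.2⟩
  have c1 : (Finset.univ.filter fun z => VRel τ A Wo r z).card ≤ (Finset.Icc r b).card :=
    Finset.card_le_card hKIcc
  have c2 : (Finset.Icc r m).card ≤ M.card := Finset.card_le_card hIccM
  have c3 : (Finset.Icc m' b).card ≤ M'.card := Finset.card_le_card hIccM'
  rw [Fin.card_Icc] at c1 c2 c3
  rw [Fin.le_def] at hrm hmb hrm' hm'b hoverlap
  omega

/-- ordered pairs of connected voters on the line. -/
def pairsFin (W : Finset C) : Finset (Fin (Fintype.card V) × Fin (Fintype.card V)) :=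
  Finset.univ.filter fun p => p.1 < p.2 ∧ VRel τ A W p.1 p.2

omit hconv in
lemma consScore_eq_pairs (W : Finset C) :
    consScore A W = (pairsFin τ A W).card := by
  classical
  have hset : {p : Sym2 V | ¬ p.IsDiag ∧ ∃ u v : V, p = s(u, v) ∧ ConnectedBy A W u v}
      = ↑((pairsFin τ A W).image fun q => s(τ q.1, τ q.2)) := by
    ext p
    simp only [Set.mem_setOf_eq, Finset.coe_image, Set.mem_image, Finset.mem_coe]
    constructor
    · rintro ⟨hd, u, v, rfl, hconn⟩
      have huv : u ≠ v := by
        intro h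
        subst h
        exact hd (by simp)
      have hrel : VRel τ A W (τ.symm u) (τ.symm v) := by
        rw [← connectedBy_iff]
        simpa using hconn
      have hij : τ.symm u ≠ τ.symm v := fun h => huv (by simpa using congrArg τ h)
      rcases hij.lt_or_gt with h | h
      · refine ⟨(τ.symm u, τ.symm v), ?_, by simp⟩
        simp only [pairsFin, Finset.mem_filter, Finset.mem_univ, true_and]
        exact ⟨h, hrel⟩
      · refine ⟨(τ.symm v, τ.symm u), ?_, ?_⟩
        · simp only [pairsFin, Finset.mem_filter, Finset.mem_univ, true_and]
          exact ⟨h, vrel_symm τ A hrel⟩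
        · simp [Sym2.eq_swap]
    · rintro ⟨q, hq, rfl⟩
      obtain ⟨hlt, hrel⟩ := (Finset.mem_filter.1 hq).2
      refine ⟨?_, τ q.1, τ q.2, rfl, (connectedBy_iff τ A W _ _).2 hrel⟩
      rw [Sym2.mk_isDiag_iff]
      exact fun h => absurd (τ.injective h) hlt.ne
  rw [consScore, hset, Set.ncard_coe_finset]
  apply Finset.card_image_of_injOn
  intro a ha b hb hab
  obtain ⟨ha1, _⟩ := (Finset.mem_filter.1 ha).2
  obtain ⟨hb1, _⟩ := (Finset.mem_filter.1 hb).2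
  rw [Sym2.eq_iff] at hab
  rcases hab with ⟨h1, h2⟩ | ⟨h1, h2⟩
  · exact Prod.ext (τ.injective h1) (τ.injective h2)
  · exfalso
    have e1 : a.1 = b.2 := τ.injective h1
    have e2 : a.2 = b.1 := τ.injective h2
    rw [e1, e2] at ha1
    exact absurd (ha1.trans hb1) (lt_irrefl _)

/-- The global splitting bound: splitting a committee into the half with small keys
and the half with large keys loses at most a factor 4 on connected pairs. -/
lemma pairs_split (Wo P : Finset C) (hP : P ⊆ Wo)
    (hkey : ∀ c ∈ P, ∀ d ∈ Wo \ P, suppKey τ A c ≤ suppKey τ A d) :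
    (pairsFin τ A Wo).card ≤
      2 * (pairsFin τ A P).card + 2 * (pairsFin τ A (Wo \ P)).card := by
  classical
  set K : Fin (Fintype.card V) → Finset (Fin (Fintype.card V)) :=
    fun r => Finset.univ.filter fun z => VRel τ A Wo r z with hK
  have hKmem : ∀ r z, z ∈ K r ↔ VRel τ A Wo r z := by
    intro r z; simp [hK]
  have hKself : ∀ x, x ∈ K x := fun x => (hKmem x x).2 Relation.ReflTransGen.refl
  set rep : Fin (Fintype.card V) → Fin (Fintype.card V) :=
    fun x => (K x).min' ⟨x, hKself x⟩ with hrep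
  have hKeq : ∀ {x y}, VRel τ A Wo x y → K x = K y := by
    intro x y hxy
    ext z
    rw [hKmem, hKmem]
    constructor
    · intro h; exact Relation.ReflTransGen.trans (vrel_symm τ A hxy) h
    · intro h; exact Relation.ReflTransGen.trans hxy h
  have hrepK : ∀ x, VRel τ A Wo x (rep x) := by
    intro x
    have := Finset.min'_mem (K x) ⟨x, hKself x⟩
    exact (hKmem x _).1 this
  have hrep_eq : ∀ {x y}, VRel τ A Wo x y → rep x = rep y := by
    intro x y hxy
    exact min'_congr (hKeq hxy) _ _
  have hrep_idem : ∀ x, rep (rep x) = rep x := fun x => (hrep_eq (hrepK x)).symm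
  set RepSet := Finset.univ.filter fun r : Fin (Fintype.card V) => rep r = r with hRepSet
  have hrep_min : ∀ r z, VRel τ A Wo r z → rep r ≤ z := by
    intro r z hz
    exact Finset.min'_le (K r) z ((hKmem r z).2 hz)
  -- fiber decomposition of the Wo-pairs
  have hfib : (pairsFin τ A Wo).card
      = ∑ r ∈ RepSet, ((pairsFin τ A Wo).filter fun p => rep p.1 = r).card := by
    apply Finset.card_eq_sum_card_fiberwise
    intro p hp
    simp only [hRepSet, Finset.mem_filter, Finset.mem_univ, true_and]
    simpa [hRepSet] using hrep_idem p.1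
  have hfibeq : ∀ r ∈ RepSet,
      ((pairsFin τ A Wo).filter fun p => rep p.1 = r)
        = (K r ×ˢ K r).filter fun p => p.1 < p.2 := by
    intro r hr
    have hrrep : rep r = r := by simpa [hRepSet] using hr
    ext ⟨u, v⟩
    simp only [pairsFin, Finset.mem_filter, Finset.mem_univ, true_and,
      Finset.mem_product]
    constructor
    · rintro ⟨⟨hlt, hrel⟩, hrepu⟩
      have hur : VRel τ A Wo u r := hrepu ▸ hrepK u
      have hru : VRel τ A Wo r u := vrel_symm τ A hur
      refine ⟨⟨(hKmem r u).2 hru, (hKmem r v).2 ?_⟩, hlt⟩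
      exact Relation.ReflTransGen.trans hru hrel
    · rintro ⟨⟨hu, hv⟩, hlt⟩
      rw [hKmem] at hu hv
      refine ⟨⟨hlt, Relation.ReflTransGen.trans (vrel_symm τ A hu) hv⟩, ?_⟩
      rw [hrep_eq (vrel_symm τ A hu)]
      exact hrrep
  -- blocks
  set M : Fin (Fintype.card V) → Finset (Fin (Fintype.card V)) :=
    fun r => Finset.univ.filter fun z => VRel τ A Wo r z ∧ VRel τ A P r z with hMdef
  set M' : Fin (Fintype.card V) → Finset (Fin (Fintype.card V)) :=
    fun r => Finset.univ.filter fun z =>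
      VRel τ A Wo r z ∧ VRel τ A (Wo \ P) z ((K r).max' ⟨r, hKself r⟩) with hM'def
  have hblock : ∀ r ∈ RepSet, (K r).card + 1 ≤ (M r).card + (M' r).card := by
    intro r hr
    have hrrep : rep r = r := by simpa [hRepSet] using hr
    have hbmem := Finset.max'_mem (K r) ⟨r, hKself r⟩
    have hb : VRel τ A Wo r ((K r).max' ⟨r, hKself r⟩) := (hKmem r _).1 hbmem
    have := block_bound τ A hconv Wo P hP hkey r ((K r).max' ⟨r, hKself r⟩)
      (fun z hz => by rw [← hrrep]; exact hrep_min r z hz) hb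
      (fun z hz => Finset.le_max' (K r) z ((hKmem r z).2 hz))
    simpa [hK, hMdef, hM'def] using this
  -- disjointness of components
  have hKdisj : ∀ r ∈ RepSet, ∀ s ∈ RepSet, r ≠ s → ∀ z, z ∈ K r → z ∈ K s → False := by
    intro r hr s hs hrs z hzr hzs
    have h1 : rep r = r := by simpa [hRepSet] using hr
    have h2 : rep s = s := by simpa [hRepSet] using hs
    rw [hKmem] at hzr hzs
    have : rep r = rep s := (hrep_eq hzr).trans (hrep_eq hzs).symm
    rw [h1, h2] at this
    exact hrs this
  -- P side
  have hMsubK : ∀ r, M r ⊆ K r := by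
    intro r z hz
    rw [hMdef, Finset.mem_filter] at hz
    exact (hKmem r z).2 hz.2.1
  have hM'subK : ∀ r, M' r ⊆ K r := by
    intro r z hz
    rw [hM'def, Finset.mem_filter] at hz
    exact (hKmem r z).2 hz.2.1
  have hPsum : ∑ r ∈ RepSet, ((M r ×ˢ M r).filter fun p => p.1 < p.2).card
      ≤ (pairsFin τ A P).card := by
    rw [← Finset.card_biUnion]
    · apply Finset.card_le_card
      intro p hp
      rw [Finset.mem_biUnion] at hp
      obtain ⟨r, hr, hpr⟩ := hp
      rw [Finset.mem_filter, Finset.mem_product] at hpr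
      obtain ⟨⟨h1, h2⟩, hlt⟩ := hpr
      rw [hMdef, Finset.mem_filter] at h1 h2
      simp only [pairsFin, Finset.mem_filter, Finset.mem_univ, true_and]
      exact ⟨hlt, Relation.ReflTransGen.trans (vrel_symm τ A h1.2.2) h2.2.2⟩
    · intro r hr s hs hrs
      simp only [Finset.disjoint_left]
      intro p hpr hps
      rw [Finset.mem_filter, Finset.mem_product] at hpr hps
      exact hKdisj r hr s hs hrs p.1 (hMsubK r hpr.1.1) (hMsubK s hps.1.1)
  -- Q side
  have hQsum : ∑ r ∈ RepSet, ((M' r ×ˢ M' r).filter fun p => p.1 < p.2).card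
      ≤ (pairsFin τ A (Wo \ P)).card := by
    rw [← Finset.card_biUnion]
    · apply Finset.card_le_card
      intro p hp
      rw [Finset.mem_biUnion] at hp
      obtain ⟨r, hr, hpr⟩ := hp
      rw [Finset.mem_filter, Finset.mem_product] at hpr
      obtain ⟨⟨h1, h2⟩, hlt⟩ := hpr
      rw [hM'def, Finset.mem_filter] at h1 h2
      simp only [pairsFin, Finset.mem_filter, Finset.mem_univ, true_and]
      exact ⟨hlt, Relation.ReflTransGen.trans h1.2.2 (vrel_symm τ A h2.2.2)⟩
    · intro r hr s hs hrs
      simp only [Finset.disjoint_left]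
      intro p hpr hps
      rw [Finset.mem_filter, Finset.mem_product] at hpr hps
      exact hKdisj r hr s hs hrs p.1 (hM'subK r hpr.1.1) (hM'subK s hps.1.1)
  -- nonemptiness of blocks
  have hMne : ∀ r ∈ RepSet, 1 ≤ (M r).card := by
    intro r hr
    refine Finset.card_pos.2 ⟨r, ?_⟩
    rw [hMdef, Finset.mem_filter]
    exact ⟨Finset.mem_univ r, Relation.ReflTransGen.refl, Relation.ReflTransGen.refl⟩
  have hM'ne : ∀ r ∈ RepSet, 1 ≤ (M' r).card := by
    intro r hr
    refine Finset.card_pos.2 ⟨(K r).max' ⟨r, hKself r⟩, ?_⟩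
    rw [hM'def, Finset.mem_filter]
    exact ⟨Finset.mem_univ _, (hKmem r _).1 (Finset.max'_mem _ _),
      Relation.ReflTransGen.refl⟩
  -- put everything together
  calc (pairsFin τ A Wo).card
      = ∑ r ∈ RepSet, ((pairsFin τ A Wo).filter fun p => rep p.1 = r).card := hfib
    _ = ∑ r ∈ RepSet, (K r).card.choose 2 := by
        apply Finset.sum_congr rfl
        intro r hr
        rw [hfibeq r hr, card_lt_pairs]
    _ ≤ ∑ r ∈ RepSet, (2 * (M r).card.choose 2 + 2 * (M' r).card.choose 2) := by
        apply Finset.sum_le_sum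
        intro r hr
        exact choose_split (hMne r hr) (hM'ne r hr) (hblock r hr)
    _ = 2 * (∑ r ∈ RepSet, (M r).card.choose 2)
        + 2 * (∑ r ∈ RepSet, (M' r).card.choose 2) := by
        rw [Finset.sum_add_distrib, Finset.mul_sum, Finset.mul_sum]
    _ ≤ 2 * (pairsFin τ A P).card + 2 * (pairsFin τ A (Wo \ P)).card := by
        apply Nat.add_le_add
        · apply Nat.mul_le_mul_left
          calc ∑ r ∈ RepSet, (M r).card.choose 2
              = ∑ r ∈ RepSet, ((M r ×ˢ M r).filter fun p => p.1 < p.2).card := by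
                apply Finset.sum_congr rfl
                intro r hr
                rw [card_lt_pairs]
            _ ≤ _ := hPsum
        · apply Nat.mul_le_mul_left
          calc ∑ r ∈ RepSet, (M' r).card.choose 2
              = ∑ r ∈ RepSet, ((M' r ×ˢ M' r).filter fun p => p.1 < p.2).card := by
                apply Finset.sum_congr rfl
                intro r hr
                rw [card_lt_pairs]
            _ ≤ _ := hQsum

end VI
lemma consScore_mono {V C : Type*} [DecidableEq C] (A : V → Finset C)
    [Finite V] {W W' : Finset C} (h : W ⊆ W') :
    consScore A W ≤ consScore A W' := by
  apply Set.ncard_le_ncard ?_ (Set.toFinite _)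
  rintro p ⟨hd, u, v, rfl, hc⟩
  refine ⟨hd, u, v, rfl, ?_⟩
  refine Relation.ReflTransGen.mono ?_ _ _ hc
  rintro a b ⟨c, hcmem⟩
  rw [Finset.mem_inter] at hcmem
  exact ⟨c, Finset.mem_inter.2 ⟨hcmem.1, h hcmem.2⟩⟩

/-- **`(1/4)`-Cons together with `(1/2)`-EJR on VI instances.** For every election
instance in the VI domain with even committee size `k`, there exists a feasible
committee (of size exactly `k`) whose `Cons` score is at least one quarter of the
optimal `Cons` score and which satisfies `(1/2)`-EJR. -/
theorem vi_quarter_cons_half_ejr {V C : Type*} [Fintype V] [Nonempty V]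
    [Fintype C] [DecidableEq V] [DecidableEq C]
    (A : V → Finset C) (k : ℕ) (hk : 0 < k) (hkm : k ≤ Fintype.card C)
    (hkeven : Even k) (hVI : IsVI A) :
    ∃ W : Finset C, W.card = k ∧
      (1 / 4 : ℝ) * (maxScore (consScore A) k : ℝ) ≤ (consScore A W : ℝ) ∧
      EJRsat A k (1 / 2 : ℝ) W := by
  classical
  obtain ⟨τ, hτ⟩ := hVI
  have hconv : ∀ c : C, ∃ i j : Fin (Fintype.card V), supp τ A c = Finset.Icc i j := by
    intro c
    obtain ⟨i, j, hij⟩ := hτ c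
    refine ⟨i, j, ?_⟩
    ext x
    have h1 : τ x ∈ Finset.univ.filter (fun v => c ∈ A v)
        ↔ τ x ∈ (Finset.Icc i j).image τ := by rw [hij]
    rw [Finset.mem_filter] at h1
    simp only [Finset.mem_univ, true_and, Finset.mem_image] at h1
    rw [supp, Finset.mem_filter]
    simp only [Finset.mem_univ, true_and]
    rw [h1]
    constructor
    · rintro ⟨y, hy, hyx⟩
      rwa [← τ.injective hyx]
    · intro hx
      exact ⟨x, hx, rfl⟩
  have hn : 0 < Fintype.card V := Fintype.card_pos
  obtain ⟨k', hk2⟩ := hkeven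
  have hk2' : k = 2 * k' := by omega
  have hk'pos : 0 < k' := by omega
  -- the optimal committee
  obtain ⟨T, hTsub, hTcard⟩ :=
    Finset.exists_subset_card_eq (show k ≤ (Finset.univ : Finset C).card by
      rwa [Finset.card_univ])
  have hpow : ((Finset.univ : Finset C).powersetCard k).Nonempty :=
    ⟨T, Finset.mem_powersetCard.2 ⟨hTsub, hTcard⟩⟩
  obtain ⟨Wo, hWomem, hWosup⟩ := Finset.exists_mem_eq_sup _ hpow (consScore A)
  have hWocard : Wo.card = k := (Finset.mem_powersetCard.1 hWomem).2
  -- split the optimal committee by key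
  obtain ⟨P, hPsub, hPcard, hPkey⟩ := exists_min_half (suppKey τ A) Wo k'
    (by rw [hWocard]; omega)
  have hsplit := pairs_split τ A hconv Wo P hPsub hPkey
  set W1 : Finset C := if (pairsFin τ A (Wo \ P)).card ≤ (pairsFin τ A P).card
    then P else Wo \ P with hW1
  have hW1sub : W1 ⊆ Wo := by
    rw [hW1]
    split
    · exact hPsub
    · exact Finset.sdiff_subset
  have hW1card : W1.card = k' := by
    rw [hW1]
    split
    · exact hPcard
    · rw [Finset.card_sdiff_of_subset hPsub, hWocard, hPcard]; omega
  have hW1best : (pairsFin τ A Wo).card ≤ 4 * (pairsFin τ A W1).card := by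
    rw [hW1]
    split
    · next hc => omega
    · next hc => push_neg at hc; omega
  -- the EJR half
  obtain ⟨W2, hW2bud, hW2sat⟩ := greedyEJR A k' hn
    (Finset.univ : Finset V).card Finset.univ (le_refl _)
  have hW2card : W2.card ≤ k' := by
    rw [Finset.card_univ] at hW2bud
    exact Nat.le_of_mul_le_mul_right hW2bud hn
  -- assemble the final committee
  have hOcard : (W1 ∪ W2).card ≤ k := by
    calc (W1 ∪ W2).card ≤ W1.card + W2.card := Finset.card_union_le _ _
      _ ≤ k' + k' := by omega
      _ = k := by omega
  obtain ⟨W, hWsub1, _, hWcard⟩ := Finset.exists_subsuperset_card_eq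
    (Finset.subset_univ (W1 ∪ W2)) hOcard (by rwa [Finset.card_univ])
  refine ⟨W, hWcard, ?_, ?_⟩
  · -- the Cons guarantee
    have hchain : maxScore (consScore A) k ≤ 4 * consScore A W := by
      calc maxScore (consScore A) k = consScore A Wo := hWosup
        _ = (pairsFin τ A Wo).card := consScore_eq_pairs τ A Wo
        _ ≤ 4 * (pairsFin τ A W1).card := hW1best
        _ = 4 * consScore A W1 := by rw [consScore_eq_pairs τ A W1]
        _ ≤ 4 * consScore A W := by
            have : consScore A W1 ≤ consScore A W :=
              consScore_mono A (le_trans Finset.subset_union_left hWsub1 :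
                W1 ⊆ W)
            omega
    have hcast : (maxScore (consScore A) k : ℝ) ≤ 4 * (consScore A W : ℝ) := by
      exact_mod_cast hchain
    linarith
  · -- the EJR guarantee
    intro ℓ hℓ1 hℓk S hsize hcommon
    have hk0 : (0 : ℝ) < (k : ℝ) := by exact_mod_cast hk
    have hnat : ℓ * Fintype.card V ≤ k' * S.card := by
      have hr : (ℓ : ℝ) * (Fintype.card V : ℝ) ≤ (k' : ℝ) * (S.card : ℝ) := by
        rw [div_mul_eq_mul_div, div_le_iff₀ hk0] at hsize
        have hkk : (k : ℝ) = 2 * (k' : ℝ) := by exact_mod_cast hk2'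
        nlinarith [hsize]
      exact_mod_cast hr
    obtain ⟨v, hvS, hvcard⟩ := hW2sat ℓ hℓ1 S (Finset.subset_univ S) hnat (by convert hcommon using 3)
    refine ⟨v, hvS, le_trans hvcard ?_⟩
    apply Finset.card_le_card
    apply Finset.inter_subset_inter _ (le_refl _)
    exact le_trans Finset.subset_union_right hWsub1
end
end
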